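/- arXiv:1511.02974 — 11 statements merged into one kernel-verified Lean document; each statement's English description precedes it below -/
import Mathlib

section
/- Suppose that for some ε > 0 there exists a bounded set E_ε ⊆ ℝⁿ such that Opt_ε ⊆ E_ε + S, where Opt_ε := {x ∈ Q : f(x) ≤ f* + ε} and S := {d ∈ ℝⁿ : x + θd ∈ Q and f(x + θd) ≤ f* + ε for all x ∈ Opt_ε and all θ ≥ 0} is the recession cone of Opt_ε. Then for any strict lower bound f_slb < f*, the growth constant is finite: there exists a finite scalar Ḡ ≥ 0 such that Dist(x, Opt) ≤ Ḡ·(f(x) − f_slb) for all x ∈ Q. -/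
/-!
A convex function that stays below `f* + ε` along a whole ray cannot increase along it, so every
recession direction `d` of `Opt_ε` moves a minimizer `z₀` to another minimizer `z₀ + d`. Writing
a point of `Opt_ε` as `e + d` with `e ∈ E_ε ⊆ closedBall z₀ r` then puts it within `r` of `Opt`.
A point `x` above the level `f* + ε` is pulled back to that level by shrinking it towards its
nearest minimizers by the factor `t = ε / (f x - f*)`, which gives `Dist(x, Opt) ≤ r / t`.
-/

open scoped Pointwise
open Filter Metric Topology

section

variable {E : Type*} [AddCommGroup E] [Module ℝ E] {Q : Set E} {f : E → ℝ}

def recessionCone (A : Set E) : Set E :=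
  {d | ∀ z ∈ A, ∀ θ : ℝ, 0 ≤ θ → z + θ • d ∈ A}

theorem ConvexOn.apply_add_le_of_mem_recessionCone {K : ℝ} {z d : E} (hf : ConvexOn ℝ Q f)
    (hz : z ∈ Q) (hzK : f z ≤ K) (hd : d ∈ recessionCone {w ∈ Q | f w ≤ K}) :
    f (z + d) ≤ f z := by
  have hbound : ∀ θ : ℝ, 1 ≤ θ → f (z + d) ≤ f z + (K - f z) * θ⁻¹ := by
    intro θ hθ
    have hθ0 : 0 < θ := one_pos.trans_le hθ
    obtain ⟨hmem, hle⟩ := hd z ⟨hz, hzK⟩ θ hθ0.le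
    have hcomb : (1 - θ⁻¹) • z + θ⁻¹ • (z + θ • d) = z + d := by
      match_scalars
      · ring
      · field_simp
    have hconv := hf.2 hz hmem (sub_nonneg.2 (inv_le_one_of_one_le₀ hθ))
      (inv_nonneg.2 hθ0.le) (sub_add_cancel 1 θ⁻¹)
    rw [hcomb, smul_eq_mul, smul_eq_mul] at hconv
    linarith [mul_le_mul_of_nonneg_left hle (inv_nonneg.2 hθ0.le)]
  have hlim : Tendsto (fun θ : ℝ => f z + (K - f z) * θ⁻¹) atTop (𝓝 (f z)) := by
    simpa using tendsto_const_nhds.add (tendsto_inv_atTop_zero.const_mul (K - f z))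
  exact ge_of_tendsto hlim ((eventually_ge_atTop 1).mono hbound)

end

section

variable {E : Type*} [NormedAddCommGroup E] [NormedSpace ℝ E] {Q : Set E} {f : E → ℝ}
  {m ε r : ℝ}

theorem infDist_argmin_le_of_subset_closedBall_add_recessionCone {z₀ x : E}
    (hf : ConvexOn ℝ Q f) (hmin : ∀ z ∈ Q, m ≤ f z) (hz₀ : z₀ ∈ Q) (hfz₀ : f z₀ = m)
    (hε : 0 ≤ ε)
    (hsub : {z ∈ Q | f z ≤ m + ε} ⊆ closedBall z₀ r + recessionCone {z ∈ Q | f z ≤ m + ε})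
    (hx : x ∈ Q) (hfx : f x ≤ m + ε) :
    infDist x {z ∈ Q | f z = m} ≤ r := by
  obtain ⟨e, he, d, hd, rfl⟩ := hsub ⟨hx, hfx⟩
  have hz₀d : z₀ + d ∈ {z ∈ Q | f z = m} := by
    have hmem : z₀ + d ∈ Q := by
      simpa using (hd z₀ ⟨hz₀, by linarith⟩ 1 zero_le_one).1
    have hle := hf.apply_add_le_of_mem_recessionCone hz₀ (by linarith) hd
    exact ⟨hmem, le_antisymm (hfz₀ ▸ hle) (hmin _ hmem)⟩
  calc infDist (e + d) _ ≤ dist (e + d) (z₀ + d) := infDist_le_dist_of_mem hz₀d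
    _ = dist e z₀ := dist_add_right e z₀ d
    _ ≤ r := he

theorem infDist_argmin_le_mul_max_of_forall_sublevel {x : E} (hf : ConvexOn ℝ Q f)
    (hOpt : {z ∈ Q | f z = m}.Nonempty) (hε : 0 < ε)
    (hlevel : ∀ y ∈ Q, f y ≤ m + ε → infDist y {z ∈ Q | f z = m} ≤ r) (hx : x ∈ Q) :
    infDist x {z ∈ Q | f z = m} ≤ r * max 1 ((f x - m) / ε) := by
  set D := infDist x {z ∈ Q | f z = m}
  have ⟨p₀, hp₀Q, hfp₀⟩ := hOpt
  have hr : 0 ≤ r := infDist_nonneg.trans (hlevel p₀ hp₀Q (by linarith))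
  by_cases hfx : f x ≤ m + ε
  · exact (hlevel x hx hfx).trans (le_mul_of_one_le_right hr (le_max_left _ _))
  rw [not_le] at hfx
  set t := ε / (f x - m)
  have ht0 : 0 < t := div_pos hε (by linarith)
  have ht1 : t < 1 := (div_lt_one (by linarith)).2 (by linarith)
  have hstep : ∀ p ∈ {z ∈ Q | f z = m}, D ≤ r + (1 - t) * dist x p := by
    rintro p ⟨hpQ, hfp⟩
    set y := AffineMap.lineMap p x t
    have hy : y = (1 - t) • p + t • x := AffineMap.lineMap_apply_module p x t
    have hyQ : y ∈ Q := hy ▸ hf.1 hpQ hx (by linarith) ht0.le (by ring)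
    have hfy : f y ≤ m + ε := by
      have hconv := hf.2 hpQ hx (by linarith) ht0.le (sub_add_cancel 1 t)
      rw [← hy, smul_eq_mul, smul_eq_mul, hfp] at hconv
      have htε : t * (f x - m) = ε := div_mul_cancel₀ ε (by linarith)
      linarith
    calc D ≤ infDist y {z ∈ Q | f z = m} + dist x y := infDist_le_infDist_add_dist
      _ ≤ r + (1 - t) * dist x p := by
        rw [dist_comm x y, dist_lineMap_right, Real.norm_of_nonneg (by linarith), dist_comm]
        linarith [hlevel y hyQ hfy]
  -- the infimum of `hstep` over `p`, i.e. `D ≤ r + (1 - t) * D`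
  have hD : (D - r) / (1 - t) ≤ D := by
    refine (le_infDist hOpt).2 fun p hp => ?_
    rw [div_le_iff₀ (by linarith)]
    linarith [hstep p hp]
  rw [div_le_iff₀ (by linarith)] at hD
  calc D ≤ r / t := by rw [le_div_iff₀ ht0]; linarith
    _ = r * ((f x - m) / ε) := by rw [div_div_eq_mul_div, mul_div_assoc]
    _ ≤ r * max 1 ((f x - m) / ε) := mul_le_mul_of_nonneg_left (le_max_right _ _) hr

end

theorem growth_constant_finite_general {n : ℕ} (Q : Set (EuclideanSpace ℝ (Fin n)))
    (f : EuclideanSpace ℝ (Fin n) → ℝ) (hfc : ConvexOn ℝ Q f)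
    (fstar : ℝ) (hattain : ∃ z ∈ Q, f z = fstar) (hmin : ∀ z ∈ Q, fstar ≤ f z)
    (fslb : ℝ) (hslb : fslb < fstar)
    (ε : ℝ) (hε : 0 < ε)
    (Eε : Set (EuclideanSpace ℝ (Fin n))) (hEbdd : Bornology.IsBounded Eε)
    (hsub : {z ∈ Q | f z ≤ fstar + ε} ⊆
      Eε + {d : EuclideanSpace ℝ (Fin n) |
        ∀ z ∈ {w ∈ Q | f w ≤ fstar + ε}, ∀ θ : ℝ, 0 ≤ θ →
          z + θ • d ∈ Q ∧ f (z + θ • d) ≤ fstar + ε}) :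
    ∃ Gbar : ℝ, 0 ≤ Gbar ∧
      ∀ x ∈ Q, Metric.infDist x {z ∈ Q | f z = fstar} ≤ Gbar * (f x - fslb) := by
  obtain ⟨z₀, hz₀, hfz₀⟩ := hattain
  obtain ⟨r, hr, hEr⟩ := hEbdd.subset_closedBall_lt 0 z₀
  have hlevel : ∀ y ∈ Q, f y ≤ fstar + ε → infDist y {z ∈ Q | f z = fstar} ≤ r :=
    fun y hy hfy => infDist_argmin_le_of_subset_closedBall_add_recessionCone hfc hmin hz₀ hfz₀
      hε.le (hsub.trans (Set.add_subset_add_right hEr)) hy hfy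
  have hδ : 0 < min ε (fstar - fslb) := lt_min hε (sub_pos.2 hslb)
  refine ⟨r / min ε (fstar - fslb), div_nonneg hr.le hδ.le, fun x hx => ?_⟩
  have hfx := hmin x hx
  calc infDist x _ ≤ r * max 1 ((f x - fstar) / ε) :=
        infDist_argmin_le_mul_max_of_forall_sublevel hfc ⟨z₀, hz₀, hfz₀⟩ hε hlevel hx
    _ ≤ r * ((f x - fslb) / min ε (fstar - fslb)) := by
        gcongr
        apply max_le
        · rw [one_le_div hδ]
          linarith [min_le_right ε (fstar - fslb)]
        · exact div_le_div₀ (by linarith) (by linarith) hδ (min_le_left _ _)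
    _ = r / min ε (fstar - fslb) * (f x - fslb) := by ring

/-- Theorem: finiteness of the growth constant `G`.
If for some `ε > 0` the `ε`-optimal level set `Opt_ε` is contained in `E_ε + S` for a bounded
set `E_ε`, where `S` is the recession cone of `Opt_ε`, then for any strict lower bound
`f_slb < f*` there is a finite `Ḡ ≥ 0` with `Dist(x, Opt) ≤ Ḡ (f x − f_slb)` for all `x ∈ Q`. -/
theorem growth_constant_finite {n : ℕ} (Q : Set (EuclideanSpace ℝ (Fin n)))
    (hQne : Q.Nonempty) (hQcl : IsClosed Q) (hQcv : Convex ℝ Q)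
    (f : EuclideanSpace ℝ (Fin n) → ℝ) (hfc : ConvexOn ℝ Q f)
    (fstar : ℝ) (hattain : ∃ z ∈ Q, f z = fstar) (hmin : ∀ z ∈ Q, fstar ≤ f z)
    (fslb : ℝ) (hslb : fslb < fstar)
    (ε : ℝ) (hε : 0 < ε)
    (Eε : Set (EuclideanSpace ℝ (Fin n))) (hEbdd : Bornology.IsBounded Eε)
    (hsub : {z ∈ Q | f z ≤ fstar + ε} ⊆
      Eε + {d : EuclideanSpace ℝ (Fin n) |
        ∀ z ∈ {w ∈ Q | f w ≤ fstar + ε}, ∀ θ : ℝ, 0 ≤ θ →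
          z + θ • d ∈ Q ∧ f (z + θ • d) ≤ fstar + ε}) :
    ∃ Gbar : ℝ, 0 ≤ Gbar ∧
      ∀ x ∈ Q, Metric.infDist x {z ∈ Q | f z = fstar} ≤ Gbar * (f x - fslb) :=
  growth_constant_finite_general Q f hfc fstar hattain hmin fslb hslb ε hε Eε hEbdd hsub
end

section
/- Consider Subgradient Descent with arbitrary step-sizes α_i ≥ 0. Then for all integers k ≥ i ≥ 0 with Σ_{l=i}^{k} α_l > 0, the following inequality holds: f_b^k ≤ f* + (Dist(x^i, Opt)² + Σ_{l=i}^{k} ‖g_l‖² α_l²) / (2 Σ_{l=i}^{k} α_l); in particular, if ‖g_l‖ ≤ M for all l, then f_b^k ≤ f* + (Dist(x^i, Opt)² + M² Σ_{l=i}^{k} α_l²) / (2 Σ_{l=i}^{k} α_l). -/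
/-!
Projection onto a convex set does not increase the distance to points of the set, so for every
minimiser `z` the subgradient inequality gives
`‖x (l+1) - z‖² ≤ ‖x l - z‖² - 2 α l (f (x l) - f*) + ‖g l‖² α l²`.
Summing over `l = i, …, k` telescopes; bounding each `f (x l)` below by the best value and taking
the infimum over `z` yields the estimate.
-/

open scoped RealInnerProductSpace

/-- `p` is the Euclidean projection of `u` onto `Q`. -/
def IsProj {n : ℕ} (Q : Set (EuclideanSpace ℝ (Fin n)))
    (u p : EuclideanSpace ℝ (Fin n)) : Prop :=
  p ∈ Q ∧ ∀ w ∈ Q, dist p u ≤ dist w u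

open Finset Metric

namespace IsProj

variable {n : ℕ} {Q : Set (EuclideanSpace ℝ (Fin n))} {u p w : EuclideanSpace ℝ (Fin n)}

theorem inner_sub_sub_nonpos (hQ : Convex ℝ Q) (h : IsProj Q u p) (hw : w ∈ Q) :
    ⟪u - p, w - p⟫ ≤ 0 := by
  have : Nonempty Q := ⟨⟨p, h.1⟩⟩
  have hbdd : BddBelow (Set.range fun w : Q => ‖u - w‖) :=
    ⟨0, by rintro _ ⟨w, rfl⟩; exact norm_nonneg _⟩
  refine (norm_eq_iInf_iff_real_inner_le_zero hQ h.1).mp ?_ w hw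
  refine le_antisymm (le_ciInf fun w => ?_) (ciInf_le hbdd ⟨p, h.1⟩)
  simpa only [dist_eq_norm, norm_sub_rev] using h.2 w w.2

theorem norm_sub_sq_le (hQ : Convex ℝ Q) (h : IsProj Q u p) (hw : w ∈ Q) :
    ‖p - w‖ ^ 2 ≤ ‖u - w‖ ^ 2 := by
  have hvi := h.inner_sub_sub_nonpos hQ hw
  have hsplit : ‖u - w‖ ^ 2 = ‖u - p‖ ^ 2 - 2 * ⟪u - p, w - p⟫ + ‖p - w‖ ^ 2 := by
    rw [← sub_add_sub_cancel u p w, norm_add_sq_real, ← neg_sub w p, inner_neg_right]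
    ring
  nlinarith [sq_nonneg ‖u - p‖]

end IsProj

theorem norm_sub_sq_le_of_subgradient_step {E : Type*} [NormedAddCommGroup E]
    [InnerProductSpace ℝ E] {x g z x' : E} {a fx fz : ℝ} (ha : 0 ≤ a)
    (hsub : fx + ⟪g, z - x⟫ ≤ fz) (hx' : ‖x' - z‖ ^ 2 ≤ ‖x - a • g - z‖ ^ 2) :
    ‖x' - z‖ ^ 2 ≤ ‖x - z‖ ^ 2 - 2 * a * (fx - fz) + ‖g‖ ^ 2 * a ^ 2 := by
  have hexpand : ‖x - a • g - z‖ ^ 2 = ‖x - z‖ ^ 2 + 2 * a * ⟪g, z - x⟫ + ‖g‖ ^ 2 * a ^ 2 := by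
    rw [sub_right_comm, norm_sub_sq_real, real_inner_smul_right, norm_smul, Real.norm_eq_abs,
      mul_pow, sq_abs, ← neg_sub z x, inner_neg_left, real_inner_comm]
    ring
  nlinarith

theorem sum_Icc_le_of_le_sub_add {d a b : ℕ → ℝ} (hd : ∀ l, d (l + 1) ≤ d l - a l + b l)
    (hd_nonneg : ∀ l, 0 ≤ d l) {i k : ℕ} (hik : i ≤ k) :
    ∑ l ∈ Icc i k, a l ≤ d i + ∑ l ∈ Icc i k, b l := by
  suffices ∑ l ∈ Icc i k, a l ≤ d i - d (k + 1) + ∑ l ∈ Icc i k, b l by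
    linarith [hd_nonneg (k + 1)]
  induction k, hik using Nat.le_induction with
  | base =>
    simp only [Icc_self, sum_singleton]
    linarith [hd i]
  | succ k hik ih =>
    rw [sum_Icc_succ_top (by omega), sum_Icc_succ_top (by omega)]
    linarith [hd (k + 1)]

theorem le_sq_infDist_of_forall_le_sq_dist {X : Type*} [PseudoMetricSpace X] {s : Set X}
    (hs : s.Nonempty) {x : X} {c : ℝ} (h : ∀ y ∈ s, c ≤ dist x y ^ 2) :
    c ≤ infDist x s ^ 2 := by
  by_contra! hlt
  obtain ⟨y, hy, hdist⟩ := (infDist_lt_iff hs).mp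
    ((Real.lt_sqrt infDist_nonneg).mpr hlt)
  have := (Real.lt_sqrt dist_nonneg).mp hdist
  linarith [h y hy]

theorem sum_two_mul_sub_le_of_subgradient_descent {n : ℕ} {Q : Set (EuclideanSpace ℝ (Fin n))}
    (hQ : Convex ℝ Q) {f : EuclideanSpace ℝ (Fin n) → ℝ} {x g : ℕ → EuclideanSpace ℝ (Fin n)}
    {α : ℕ → ℝ} (hα : ∀ l, 0 ≤ α l) (hsub : ∀ l, ∀ w ∈ Q, f (x l) + ⟪g l, w - x l⟫ ≤ f w)
    (hupd : ∀ l, IsProj Q (x l - α l • g l) (x (l + 1))) {z : EuclideanSpace ℝ (Fin n)}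
    (hz : z ∈ Q) {i k : ℕ} (hik : i ≤ k) :
    ∑ l ∈ Icc i k, 2 * α l * (f (x l) - f z) ≤
      ‖x i - z‖ ^ 2 + ∑ l ∈ Icc i k, ‖g l‖ ^ 2 * α l ^ 2 :=
  sum_Icc_le_of_le_sub_add (d := fun l => ‖x l - z‖ ^ 2)
    (fun l => norm_sub_sq_le_of_subgradient_step (hα l) (hsub l z hz)
      ((hupd l).norm_sub_sq_le hQ hz)) (fun _ => sq_nonneg _) hik

theorem subgradient_descent_bound_general {n : ℕ} (Q : Set (EuclideanSpace ℝ (Fin n)))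
    (hQcv : Convex ℝ Q)
    (f : EuclideanSpace ℝ (Fin n) → ℝ)
    (fstar : ℝ) (hattain : ∃ z ∈ Q, f z = fstar)
    (x g : ℕ → EuclideanSpace ℝ (Fin n)) (α : ℕ → ℝ)
    (hα : ∀ i, 0 ≤ α i)
    (hsub : ∀ i, ∀ w ∈ Q, f (x i) + ⟪g i, w - x i⟫ ≤ f w)
    (hupd : ∀ i, IsProj Q (x i - α i • g i) (x (i + 1)))
    (i k : ℕ) (hik : i ≤ k) (hpos : 0 < ∑ l ∈ Finset.Icc i k, α l) :
    ((Finset.range (k + 1)).inf' Finset.nonempty_range_add_one (fun l => f (x l)) ≤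
      fstar + (Metric.infDist (x i) {z ∈ Q | f z = fstar} ^ 2
        + ∑ l ∈ Finset.Icc i k, ‖g l‖ ^ 2 * α l ^ 2) / (2 * ∑ l ∈ Finset.Icc i k, α l)) ∧
    (∀ M : ℝ, (∀ l, ‖g l‖ ≤ M) →
      (Finset.range (k + 1)).inf' Finset.nonempty_range_add_one (fun l => f (x l)) ≤
        fstar + (Metric.infDist (x i) {z ∈ Q | f z = fstar} ^ 2
          + M ^ 2 * ∑ l ∈ Finset.Icc i k, α l ^ 2) / (2 * ∑ l ∈ Finset.Icc i k, α l)) := by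
  set fb := (range (k + 1)).inf' nonempty_range_add_one fun l => f (x l)
  set A := ∑ l ∈ Icc i k, α l
  set S := ∑ l ∈ Icc i k, ‖g l‖ ^ 2 * α l ^ 2
  set Opt := {z ∈ Q | f z = fstar}
  have hbound : 2 * A * (fb - fstar) ≤ infDist (x i) Opt ^ 2 + S := by
    suffices h : ∀ z ∈ Opt, 2 * A * (fb - fstar) - S ≤ dist (x i) z ^ 2 by
      linarith [le_sq_infDist_of_forall_le_sq_dist (s := Opt) hattain h]
    rintro z ⟨hz, rfl⟩
    have hdescent := sum_two_mul_sub_le_of_subgradient_descent hQcv hα hsub hupd hz hik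
    have hbest : ∑ l ∈ Icc i k, 2 * α l * (fb - f z) ≤
        ∑ l ∈ Icc i k, 2 * α l * (f (x l) - f z) := by
      gcongr with l hl
      · linarith [hα l]
      · exact inf'_le _ (mem_range.mpr (Nat.lt_succ_of_le (mem_Icc.mp hl).2))
    rw [← sum_mul, ← mul_sum] at hbest
    rw [dist_eq_norm]
    linarith
  have hfirst : fb ≤ fstar + (infDist (x i) Opt ^ 2 + S) / (2 * A) := by
    rw [← sub_le_iff_le_add', le_div_iff₀ (by positivity)]
    linarith
  refine ⟨hfirst, fun M hM => hfirst.trans ?_⟩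
  have hSM : S ≤ M ^ 2 * ∑ l ∈ Icc i k, α l ^ 2 := by
    rw [mul_sum]
    exact sum_le_sum fun l _ => mul_le_mul_of_nonneg_right
      (pow_le_pow_left₀ (norm_nonneg _) (hM l) 2) (sq_nonneg _)
  gcongr fstar + (_ + ?_) / _

/-- convergence bounds for Subgradient Descent with arbitrary step-sizes. -/
theorem subgradient_descent_bound {n : ℕ} (Q : Set (EuclideanSpace ℝ (Fin n)))
    (hQne : Q.Nonempty) (hQcl : IsClosed Q) (hQcv : Convex ℝ Q)
    (f : EuclideanSpace ℝ (Fin n) → ℝ) (hfc : ConvexOn ℝ Q f)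
    (fstar : ℝ) (hattain : ∃ z ∈ Q, f z = fstar) (hmin : ∀ z ∈ Q, fstar ≤ f z)
    (x g : ℕ → EuclideanSpace ℝ (Fin n)) (α : ℕ → ℝ)
    (hx0 : x 0 ∈ Q) (hα : ∀ i, 0 ≤ α i)
    (hsub : ∀ i, ∀ w ∈ Q, f (x i) + ⟪g i, w - x i⟫ ≤ f w)
    (hupd : ∀ i, IsProj Q (x i - α i • g i) (x (i + 1)))
    (i k : ℕ) (hik : i ≤ k) (hpos : 0 < ∑ l ∈ Finset.Icc i k, α l) :
    ((Finset.range (k + 1)).inf' Finset.nonempty_range_add_one (fun l => f (x l)) ≤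
      fstar + (Metric.infDist (x i) {z ∈ Q | f z = fstar} ^ 2
        + ∑ l ∈ Finset.Icc i k, ‖g l‖ ^ 2 * α l ^ 2) / (2 * ∑ l ∈ Finset.Icc i k, α l)) ∧
    (∀ M : ℝ, (∀ l, ‖g l‖ ≤ M) →
      (Finset.range (k + 1)).inf' Finset.nonempty_range_add_one (fun l => f (x l)) ≤
        fstar + (Metric.infDist (x i) {z ∈ Q | f z = fstar} ^ 2
          + M ^ 2 * ∑ l ∈ Finset.Icc i k, α l ^ 2) / (2 * ∑ l ∈ Finset.Icc i k, α l)) :=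
  subgradient_descent_bound_general Q hQcv f fstar hattain x g α hα hsub hupd i k hik hpos
end

section
/- Suppose f* is known and the step-sizes of Subgradient Descent are chosen as α_i := (f(x^i) − f*)/‖g_i‖² when f(x^i) > f* (in which case g_i ≠ 0 automatically) and α_i := 0 when f(x^i) = f*. If every chosen subgradient satisfies ‖g_i‖ ≤ M, then for all integers k ≥ i ≥ 0: f_b^k ≤ f* + M·Dist(x^i, Opt)/√(k − i + 1). -/
/-!
Fix a minimiser `z`. The subgradient inequality gives `f (xˡ) - f* ≤ ⟪gₗ, xˡ - z⟫`, and with the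
Polyak step this turns the expansion of `‖xˡ - αₗ gₗ - z‖²` into a decrease of
`(f (xˡ) - f*)² / ‖gₗ‖² ≥ (f (xˡ) - f*)² / M²`; projecting onto `Q` only brings the point closer to
`z`. Summing over `l = i, …, k` telescopes to `(k - i + 1) (f_b^k - f*)² ≤ M² ‖xⁱ - z‖²`, and
taking the infimum over `z` gives the bound.
-/

open scoped RealInnerProductSpace

open Finset

theorem IsProj.norm_sub_le {n : ℕ} {Q : Set (EuclideanSpace ℝ (Fin n))}
    {u p z : EuclideanSpace ℝ (Fin n)} (hQ : Convex ℝ Q) (hp : IsProj Q u p) (hz : z ∈ Q) :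
    ‖p - z‖ ≤ ‖u - z‖ := by
  have hmin : ‖u - p‖ = ⨅ w : Q, ‖u - (w : EuclideanSpace ℝ (Fin n))‖ := by
    have : Nonempty Q := ⟨⟨p, hp.1⟩⟩
    have hbdd : BddBelow (Set.range fun w : Q => ‖u - (w : EuclideanSpace ℝ (Fin n))‖) :=
      ⟨0, by rintro _ ⟨w, rfl⟩; exact norm_nonneg _⟩
    refine le_antisymm (le_ciInf fun w => ?_) (ciInf_le hbdd ⟨p, hp.1⟩)
    simpa only [dist_eq_norm, norm_sub_rev u] using hp.2 w w.2
  have hvar : ⟪u - p, z - p⟫ ≤ 0 :=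
    (norm_eq_iInf_iff_real_inner_le_zero hQ hp.1).1 hmin z hz
  have hexp : ‖u - z‖ ^ 2 = ‖u - p‖ ^ 2 - 2 * ⟪u - p, z - p⟫ + ‖p - z‖ ^ 2 := by
    rw [norm_sub_rev p z, ← norm_sub_sq_real, sub_sub_sub_cancel_right]
  exact le_of_sq_le_sq (by nlinarith [sq_nonneg ‖u - p‖]) (norm_nonneg _)

theorem sq_le_sq_mul_norm_sub_polyak_step {E : Type*} [NormedAddCommGroup E]
    [InnerProductSpace ℝ E] {x z g : E} {a M : ℝ} (ha : 0 ≤ a) (hag : a ≤ ⟪g, x - z⟫)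
    (hgM : ‖g‖ ≤ M) :
    a ^ 2 ≤ M ^ 2 * (‖x - z‖ ^ 2 - ‖x - (a / ‖g‖ ^ 2) • g - z‖ ^ 2) := by
  rcases eq_or_ne g 0 with rfl | hg
  · obtain rfl : a = 0 := le_antisymm (by simpa using hag) ha
    simp
  set G := ‖g‖ ^ 2
  have hG : 0 < G := by positivity
  have hexp : ‖x - (a / G) • g - z‖ ^ 2 = ‖x - z‖ ^ 2 - 2 * (a / G) * ⟪g, x - z⟫ + a ^ 2 / G := by
    rw [sub_right_comm, norm_sub_sq_real, real_inner_smul_right, norm_smul, mul_pow,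
      Real.norm_eq_abs, sq_abs, real_inner_comm]
    field_simp
    ring
  have hdescent : a ^ 2 / G ≤ ‖x - z‖ ^ 2 - ‖x - (a / G) • g - z‖ ^ 2 := by
    have : 2 * (a / G) * a ≤ 2 * (a / G) * ⟪g, x - z⟫ := by gcongr
    rw [hexp]
    field_simp at this ⊢
    linarith
  have hGM : G ≤ M ^ 2 := pow_le_pow_left₀ (norm_nonneg g) hgM 2
  calc a ^ 2 ≤ M ^ 2 * (a ^ 2 / G) := by
        rw [mul_div_assoc', le_div_iff₀ hG]
        nlinarith [mul_le_mul_of_nonneg_left hGM (sq_nonneg a)]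
    _ ≤ _ := by gcongr

theorem IsProj.polyak_step_sq_le {n : ℕ} {Q : Set (EuclideanSpace ℝ (Fin n))}
    {x z g p : EuclideanSpace ℝ (Fin n)} {a M : ℝ} (hQ : Convex ℝ Q)
    (hp : IsProj Q (x - (a / ‖g‖ ^ 2) • g) p) (hz : z ∈ Q) (ha : 0 ≤ a)
    (hag : a ≤ ⟪g, x - z⟫) (hgM : ‖g‖ ≤ M) :
    a ^ 2 ≤ M ^ 2 * (‖x - z‖ ^ 2 - ‖p - z‖ ^ 2) :=
  calc a ^ 2 ≤ M ^ 2 * (‖x - z‖ ^ 2 - ‖x - (a / ‖g‖ ^ 2) • g - z‖ ^ 2) :=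
        sq_le_sq_mul_norm_sub_polyak_step ha hag hgM
    _ ≤ M ^ 2 * (‖x - z‖ ^ 2 - ‖p - z‖ ^ 2) := by gcongr; exact hp.norm_sub_le hQ hz

theorem sum_Icc_le_mul_of_le_mul_sub {e d : ℕ → ℝ} {c : ℝ} {i k : ℕ} (hik : i ≤ k)
    (hc : 0 ≤ c) (hd : 0 ≤ d (k + 1)) (h : ∀ l, e l ≤ c * (d l - d (l + 1))) :
    ∑ l ∈ Icc i k, e l ≤ c * d i :=
  calc ∑ l ∈ Icc i k, e l ≤ ∑ l ∈ Icc i k, c * (d l - d (l + 1)) := sum_le_sum fun l _ => h l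
    _ = c * (d i - d (k + 1)) := by
      rw [← mul_sum, ← neg_sub (d (k + 1)), ← sum_Icc_sub hik, ← sum_neg_distrib]
      simp only [neg_sub]
    _ ≤ c * d i := by nlinarith

theorem le_div_sqrt_of_mul_sq_le {b c N : ℝ} (hc : 0 ≤ c) (hN : 0 < N) (h : N * b ^ 2 ≤ c ^ 2) :
    b ≤ c / √N := by
  rw [le_div_iff₀ (Real.sqrt_pos.2 hN)]
  refine le_of_sq_le_sq ?_ hc
  rwa [mul_pow, Real.sq_sqrt hN.le, mul_comm]

theorem le_div_sqrt_of_sum_Icc_sq_le {e : ℕ → ℝ} {b c : ℝ} {i k : ℕ} (hik : i ≤ k)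
    (hb : 0 ≤ b) (hc : 0 ≤ c) (hbe : ∀ l ∈ Icc i k, b ≤ e l)
    (hsum : ∑ l ∈ Icc i k, e l ^ 2 ≤ c ^ 2) : b ≤ c / √((k : ℝ) - i + 1) := by
  have hN : (0 : ℝ) < k - i + 1 := by linarith [(Nat.cast_le (α := ℝ)).2 hik]
  refine le_div_sqrt_of_mul_sq_le hc hN (le_trans ?_ hsum)
  have := card_nsmul_le_sum _ _ _ fun l hl => pow_le_pow_left₀ hb (hbe l hl) 2
  rw [nsmul_eq_mul, Nat.card_Icc, Nat.cast_sub (hik.trans k.le_succ), Nat.cast_succ] at this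
  linarith

theorem Metric.le_mul_infDist_of_forall_le_mul_dist {X : Type*} [PseudoMetricSpace X]
    {x : X} {s : Set X} {a c : ℝ} (hs : s.Nonempty) (hc : 0 ≤ c)
    (h : ∀ y ∈ s, a ≤ c * dist x y) : a ≤ c * infDist x s := by
  rcases hc.eq_or_lt with rfl | hc
  · obtain ⟨y, hy⟩ := hs
    simpa using h y hy
  rw [← div_le_iff₀' hc]
  exact (le_infDist hs).2 fun y hy => (div_le_iff₀' hc).2 (h y hy)

theorem subgradient_descent_known_fstar_general {n : ℕ} (Q : Set (EuclideanSpace ℝ (Fin n)))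
    (hQcv : Convex ℝ Q)
    (f : EuclideanSpace ℝ (Fin n) → ℝ)
    (fstar : ℝ) (hattain : ∃ z ∈ Q, f z = fstar) (hmin : ∀ z ∈ Q, fstar ≤ f z)
    (M : ℝ)
    (x g : ℕ → EuclideanSpace ℝ (Fin n)) (α : ℕ → ℝ)
    (hx0 : x 0 ∈ Q)
    (hsub : ∀ i, ∀ w ∈ Q, f (x i) + ⟪g i, w - x i⟫ ≤ f w)
    (hgM : ∀ i, ‖g i‖ ≤ M)
    (hα : ∀ i, (fstar < f (x i) → α i = (f (x i) - fstar) / ‖g i‖ ^ 2) ∧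
               (f (x i) = fstar → α i = 0))
    (hupd : ∀ i, IsProj Q (x i - α i • g i) (x (i + 1)))
    (i k : ℕ) (hik : i ≤ k) :
    (Finset.range (k + 1)).inf' Finset.nonempty_range_add_one (fun l => f (x l)) ≤
      fstar + M * Metric.infDist (x i) {z ∈ Q | f z = fstar} /
        Real.sqrt ((k : ℝ) - (i : ℝ) + 1) := by
  set fb := (range (k + 1)).inf' nonempty_range_add_one fun l => f (x l)
  have hxQ : ∀ l, x l ∈ Q := Nat.rec hx0 fun l _ => (hupd l).1
  have hα' : ∀ l, α l = (f (x l) - fstar) / ‖g l‖ ^ 2 := fun l => by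
    rcases (hmin _ (hxQ l)).lt_or_eq with h | h
    · exact (hα l).1 h
    · rw [(hα l).2 h.symm, ← h, sub_self, zero_div]
  have hM : 0 ≤ M := (norm_nonneg _).trans (hgM 0)
  suffices ∀ z ∈ {z ∈ Q | f z = fstar}, fb - fstar ≤ M / √(k - i + 1) * dist (x i) z by
    have := Metric.le_mul_infDist_of_forall_le_mul_dist (s := {z ∈ Q | f z = fstar}) hattain
      (by positivity) this
    rw [mul_div_right_comm]
    linarith
  rintro z ⟨hzQ, rfl⟩
  have hgap : ∀ l, f (x l) - f z ≤ ⟪g l, x l - z⟫ := fun l => by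
    rw [← neg_sub z, inner_neg_right]
    linarith [hsub l z hzQ]
  have hstep : ∀ l, (f (x l) - f z) ^ 2 ≤ M ^ 2 * (‖x l - z‖ ^ 2 - ‖x (l + 1) - z‖ ^ 2) :=
    fun l => (hα' l ▸ hupd l).polyak_step_sq_le hQcv hzQ (sub_nonneg.2 (hmin _ (hxQ l)))
      (hgap l) (hgM l)
  have hfb_ge : f z ≤ fb := le_inf' _ _ fun l _ => hmin _ (hxQ l)
  have hfb_le : ∀ l ∈ Icc i k, fb - f z ≤ f (x l) - f z := fun l hl =>
    sub_le_sub_right (inf'_le _ (mem_range.2 (Nat.lt_succ_of_le (mem_Icc.1 hl).2))) _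
  rw [dist_eq_norm, div_mul_eq_mul_div]
  refine le_div_sqrt_of_sum_Icc_sq_le hik (sub_nonneg.2 hfb_ge) (by positivity) hfb_le ?_
  rw [mul_pow]
  exact sum_Icc_le_mul_of_le_mul_sub hik (sq_nonneg M) (sq_nonneg _) hstep

/-- Subgradient Descent with the Polyak step-size when `f*` is known. -/
theorem subgradient_descent_known_fstar {n : ℕ} (Q : Set (EuclideanSpace ℝ (Fin n)))
    (hQne : Q.Nonempty) (hQcl : IsClosed Q) (hQcv : Convex ℝ Q)
    (f : EuclideanSpace ℝ (Fin n) → ℝ) (hfc : ConvexOn ℝ Q f)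
    (fstar : ℝ) (hattain : ∃ z ∈ Q, f z = fstar) (hmin : ∀ z ∈ Q, fstar ≤ f z)
    (M : ℝ)
    (x g : ℕ → EuclideanSpace ℝ (Fin n)) (α : ℕ → ℝ)
    (hx0 : x 0 ∈ Q)
    (hsub : ∀ i, ∀ w ∈ Q, f (x i) + ⟪g i, w - x i⟫ ≤ f w)
    (hgM : ∀ i, ‖g i‖ ≤ M)
    (hα : ∀ i, (fstar < f (x i) → α i = (f (x i) - fstar) / ‖g i‖ ^ 2) ∧
               (f (x i) = fstar → α i = 0))
    (hupd : ∀ i, IsProj Q (x i - α i • g i) (x (i + 1)))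
    (i k : ℕ) (hik : i ≤ k) :
    (Finset.range (k + 1)).inf' Finset.nonempty_range_add_one (fun l => f (x l)) ≤
      fstar + M * Metric.infDist (x i) {z ∈ Q | f z = fstar} /
        Real.sqrt ((k : ℝ) - (i : ℝ) + 1) :=
  subgradient_descent_known_fstar_general Q hQcv f fstar hattain hmin M x g α hx0 hsub hgM hα hupd i
    k hik
end

section
/- Let ε > 0 be given and run Subgradient Descent with step-sizes α_i := ε/‖g_i‖² (with α_i := 0 if g_i = 0, in which case x^i is optimal), where every chosen subgradient satisfies ‖g_i‖ ≤ M. Then for every integer N ≥ M²·Dist(x⁰, Opt)²/ε² − 1 it holds that f_b^N ≤ f* + ε. -/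
open scoped RealInnerProductSpace Classical

namespace IsProj

variable {n : ℕ} {Q : Set (EuclideanSpace ℝ (Fin n))} {u p z : EuclideanSpace ℝ (Fin n)}

theorem eq_iInf_norm_sub (hp : IsProj Q u p) : ‖u - p‖ = ⨅ w : Q, ‖u - w‖ := by
  have : Nonempty Q := ⟨⟨p, hp.1⟩⟩
  refine le_antisymm (le_ciInf fun w => ?_) (ciInf_le ?_ (⟨p, hp.1⟩ : Q))
  · simpa only [dist_comm, dist_eq_norm] using hp.2 w w.2
  · exact ⟨0, Set.forall_mem_range.2 fun w => norm_nonneg _⟩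

theorem inner_sub_nonpos (hQ : Convex ℝ Q) (hp : IsProj Q u p) (hz : z ∈ Q) :
    ⟪u - p, z - p⟫ ≤ 0 :=
  (norm_eq_iInf_iff_real_inner_le_zero hQ hp.1).1 hp.eq_iInf_norm_sub z hz

theorem sq_norm_sub_le (hQ : Convex ℝ Q) (hp : IsProj Q u p) (hz : z ∈ Q) :
    ‖p - z‖ ^ 2 ≤ ‖u - z‖ ^ 2 := by
  have hobtuse : 0 ≤ ⟪u - p, p - z⟫ := by
    rw [← neg_sub z p, inner_neg_right]
    linarith [hp.inner_sub_nonpos hQ hz]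
  have hsplit : ‖u - z‖ ^ 2 = ‖u - p‖ ^ 2 + 2 * ⟪u - p, p - z⟫ + ‖p - z‖ ^ 2 := by
    rw [← norm_add_sq_real, sub_add_sub_cancel]
  nlinarith [sq_nonneg ‖u - p‖]

theorem sq_norm_sub_le_of_step (hQ : Convex ℝ Q) {x g : EuclideanSpace ℝ (Fin n)} {ε δ M : ℝ}
    (hp : IsProj Q (x - (ε / ‖g‖ ^ 2) • g) p) (hz : z ∈ Q) (hg : g ≠ 0) (hgM : ‖g‖ ≤ M)
    (hε : 0 ≤ ε) (hεδ : ε ≤ 2 * δ) (hδ : δ ≤ ⟪g, x - z⟫) :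
    ‖p - z‖ ^ 2 ≤ ‖x - z‖ ^ 2 - ε * (2 * δ - ε) / M ^ 2 := by
  have hg2 : 0 < ‖g‖ ^ 2 := by positivity
  have hgM2 : ‖g‖ ^ 2 ≤ M ^ 2 := pow_le_pow_left₀ (norm_nonneg g) hgM 2
  have hexpand : ‖x - (ε / ‖g‖ ^ 2) • g - z‖ ^ 2
      = ‖x - z‖ ^ 2 - ε * (2 * ⟪g, x - z⟫ - ε) / ‖g‖ ^ 2 := by
    rw [sub_right_comm, norm_sub_sq_real, real_inner_smul_right, real_inner_comm, norm_smul,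
      Real.norm_eq_abs, mul_pow, sq_abs]
    field_simp
    ring
  calc ‖p - z‖ ^ 2 ≤ ‖x - (ε / ‖g‖ ^ 2) • g - z‖ ^ 2 := hp.sq_norm_sub_le hQ hz
    _ ≤ ‖x - z‖ ^ 2 - ε * (2 * δ - ε) / ‖g‖ ^ 2 := by
        rw [hexpand]
        gcongr
    _ ≤ ‖x - z‖ ^ 2 - ε * (2 * δ - ε) / M ^ 2 := by
        gcongr

end IsProj

theorem add_mul_le_of_forall_le_sub {a : ℕ → ℝ} {r : ℝ} {m : ℕ}
    (h : ∀ k < m, a (k + 1) ≤ a k - r) : a m + m * r ≤ a 0 := by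
  induction m with
  | zero => simp
  | succ m ih =>
    have := h m m.lt_succ_self
    have := ih fun k hk => h k (hk.trans m.lt_succ_self)
    push_cast
    linarith

theorem Metric.le_sq_infDist {E : Type*} [PseudoMetricSpace E] {x : E} {s : Set E} {r : ℝ}
    (hs : s.Nonempty) (h : ∀ y ∈ s, r ≤ dist x y ^ 2) : r ≤ Metric.infDist x s ^ 2 :=
  (Real.sqrt_le_iff.1 <| (Metric.le_infDist hs).2 fun y hy =>
    Real.sqrt_le_iff.2 ⟨dist_nonneg, h y hy⟩).2

theorem subgradient_descent_eps_step_general {n : ℕ} (Q : Set (EuclideanSpace ℝ (Fin n)))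
    (hQcv : Convex ℝ Q)
    (f : EuclideanSpace ℝ (Fin n) → ℝ)
    (fstar : ℝ) (hattain : ∃ z ∈ Q, f z = fstar)
    (ε M : ℝ) (hε : 0 < ε)
    (x g : ℕ → EuclideanSpace ℝ (Fin n)) (α : ℕ → ℝ)
    (hsub : ∀ i, ∀ w ∈ Q, f (x i) + ⟪g i, w - x i⟫ ≤ f w)
    (hgM : ∀ i, ‖g i‖ ≤ M)
    (hα : ∀ i, α i = if g i = 0 then 0 else ε / ‖g i‖ ^ 2)
    (hupd : ∀ i, IsProj Q (x i - α i • g i) (x (i + 1)))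
    (N : ℕ)
    (hN : M ^ 2 * Metric.infDist (x 0) {z ∈ Q | f z = fstar} ^ 2 / ε ^ 2 - 1 ≤ (N : ℝ)) :
    (Finset.range (N + 1)).inf' Finset.nonempty_range_add_one (fun l => f (x l)) ≤ fstar + ε := by
  set fb := (Finset.range (N + 1)).inf' Finset.nonempty_range_add_one (fun l => f (x l))
  set δ := fb - fstar
  by_contra! hfb
  obtain ⟨z₀, hz₀Q, hz₀⟩ := hattain
  have hgap : ∀ k ≤ N, ∀ z ∈ Q, f z = fstar → δ ≤ ⟪g k, x k - z⟫ := by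
    intro k hk z hzQ hz
    have hfb_le : fb ≤ f (x k) := Finset.inf'_le _ (Finset.mem_range_succ_iff.2 hk)
    have := hsub k z hzQ
    rw [← neg_sub (x k) z, inner_neg_right] at this
    linarith
  have hg : ∀ k ≤ N, g k ≠ 0 := by
    intro k hk hgk
    have := hgap k hk z₀ hz₀Q hz₀
    rw [hgk, inner_zero_left] at this
    linarith
  have hM : 0 < M := (norm_pos_iff.2 (hg 0 N.zero_le)).trans_le (hgM 0)
  have hdescent : ∀ z ∈ {z ∈ Q | f z = fstar},
      (N + 1 : ℕ) * (ε * (2 * δ - ε) / M ^ 2) ≤ dist (x 0) z ^ 2 := by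
    rintro z ⟨hzQ, hz⟩
    have := add_mul_le_of_forall_le_sub (a := fun k => ‖x k - z‖ ^ 2) fun k hk => by
      have hk : k ≤ N := Nat.lt_succ_iff.1 hk
      have hstep := hupd k
      rw [hα k, if_neg (hg k hk)] at hstep
      exact hstep.sq_norm_sub_le_of_step hQcv hzQ (hg k hk) (hgM k) hε.le (by linarith)
        (hgap k hk z hzQ hz)
    rw [dist_eq_norm]
    linarith [sq_nonneg ‖x (N + 1) - z‖]
  have hD := Metric.le_sq_infDist (s := {z ∈ Q | f z = fstar}) ⟨z₀, hz₀Q, hz₀⟩ hdescent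
  rw [sub_le_iff_le_add, div_le_iff₀ (by positivity)] at hN
  have : (N + 1 : ℝ) * (ε * (2 * δ - ε)) ≤ (N + 1) * ε ^ 2 :=
    calc (N + 1 : ℝ) * (ε * (2 * δ - ε))
        = M ^ 2 * ((N + 1 : ℕ) * (ε * (2 * δ - ε) / M ^ 2)) := by push_cast; field_simp
      _ ≤ M ^ 2 * Metric.infDist (x 0) {z ∈ Q | f z = fstar} ^ 2 := by gcongr
      _ ≤ (N + 1) * ε ^ 2 := by linarith
  have : ε * (2 * δ - ε) ≤ ε ^ 2 := le_of_mul_le_mul_left this N.cast_add_one_pos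
  nlinarith [mul_pos hε (show 0 < δ - ε by linarith)]

/-- Subgradient Descent with constant-length step-size rule `α_i = ε/‖g_i‖²`. -/
theorem subgradient_descent_eps_step {n : ℕ} (Q : Set (EuclideanSpace ℝ (Fin n)))
    (hQne : Q.Nonempty) (hQcl : IsClosed Q) (hQcv : Convex ℝ Q)
    (f : EuclideanSpace ℝ (Fin n) → ℝ) (hfc : ConvexOn ℝ Q f)
    (fstar : ℝ) (hattain : ∃ z ∈ Q, f z = fstar) (hmin : ∀ z ∈ Q, fstar ≤ f z)
    (ε M : ℝ) (hε : 0 < ε)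
    (x g : ℕ → EuclideanSpace ℝ (Fin n)) (α : ℕ → ℝ)
    (hx0 : x 0 ∈ Q)
    (hsub : ∀ i, ∀ w ∈ Q, f (x i) + ⟪g i, w - x i⟫ ≤ f w)
    (hgM : ∀ i, ‖g i‖ ≤ M)
    (hα : ∀ i, α i = if g i = 0 then 0 else ε / ‖g i‖ ^ 2)
    (hupd : ∀ i, IsProj Q (x i - α i • g i) (x (i + 1)))
    (N : ℕ)
    (hN : M ^ 2 * Metric.infDist (x 0) {z ∈ Q | f z = fstar} ^ 2 / ε ^ 2 - 1 ≤ (N : ℝ)) :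
    (Finset.range (N + 1)).inf' Finset.nonempty_range_add_one (fun l => f (x l)) ≤ fstar + ε :=
  subgradient_descent_eps_step_general Q hQcv f fstar hattain ε M hε x g α hsub hgM hα hupd N hN
end

section
/- Let δ ∈ (0,1) and F > 0 be given, and run Subgradient Descent from x̂⁰ ∈ Q with step-sizes α_j := δ(f(x̂⁰) − f_slb)/(F‖g_j‖²) (with α_j := 0 if g_j = 0, in which case x^j is optimal), where every chosen subgradient satisfies ‖g_j‖ ≤ M. Then for all j ≥ 0: f_b^j − f_slb ≤ f* − f_slb + [ G²M²F/(2δ(j+1)) + δ/(2F) ]·(f(x̂⁰) − f_slb). -/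
/-!
For every minimiser `z`, one projected subgradient step gives
`‖x_{l+1} - z‖² ≤ ‖x_l - z‖² - 2 α_l (f(x_l) - f*) + α_l² ‖g_l‖²`, and the chosen step-sizes make
`α_l ‖g_l‖² = c := δ (f(x̂⁰) - f_slb) / F` constant. Summing over `l ≤ j` and passing to the
infimum over minimisers gives `(∑ α_l) (2 (f_b^j - f*) - c) ≤ Dist(x̂⁰, Opt)² ≤ G² (f(x̂⁰) - f_slb)²`,
and `∑ α_l ≥ (j + 1) c / M²`. If instead some `g_l` vanishes, `x_l` is already optimal.
-/

open scoped RealInnerProductSpace Classical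

open Finset

lemma le_infDist_sq_of_forall_le {X : Type*} [PseudoMetricSpace X] {s : Set X} (hs : s.Nonempty)
    {x : X} {r : ℝ} (h : ∀ y ∈ s, r ≤ dist x y ^ 2) : r ≤ Metric.infDist x s ^ 2 := by
  rcases le_or_gt r 0 with hr | hr
  · exact hr.trans (sq_nonneg _)
  have : √r ≤ Metric.infDist x s := (Metric.le_infDist hs).2 fun y hy =>
    (Real.sqrt_le_left dist_nonneg).2 (h y hy)
  simpa [Real.sq_sqrt hr.le] using pow_le_pow_left₀ (Real.sqrt_nonneg r) this 2

section InnerProductSpace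

variable {E : Type*} [NormedAddCommGroup E] [InnerProductSpace ℝ E]

lemma norm_sub_le_of_forall_dist_le {K : Set E} (hK : Convex ℝ K) {u p z : E} (hp : p ∈ K)
    (hmin : ∀ w ∈ K, dist p u ≤ dist w u) (hz : z ∈ K) : ‖p - z‖ ≤ ‖u - z‖ := by
  have : Nonempty K := ⟨⟨p, hp⟩⟩
  have hinf : ‖u - p‖ = ⨅ w : K, ‖u - w‖ :=
    le_antisymm (le_ciInf fun w => by simpa only [dist_comm, dist_eq_norm] using hmin w w.2)
      (ciInf_le ⟨0, Set.forall_mem_range.2 fun _ => norm_nonneg _⟩ (⟨p, hp⟩ : K))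
  have hobtuse : ⟪u - p, z - p⟫ ≤ 0 := (norm_eq_iInf_iff_real_inner_le_zero hK hp).1 hinf z hz
  have hsplit : ‖u - z‖ ^ 2 = ‖u - p‖ ^ 2 - 2 * ⟪u - p, z - p⟫ + ‖p - z‖ ^ 2 := by
    rw [show u - z = (u - p) - (z - p) by abel, norm_sub_sq_real, ← norm_neg (z - p), neg_sub]
  exact pow_le_pow_iff_left₀ (norm_nonneg _) (norm_nonneg _) two_ne_zero |>.1 <| by
    nlinarith [sq_nonneg ‖u - p‖]

lemma norm_sub_sq_le_of_subgradient_step_s10 {f : E → ℝ} {x g p z : E} {α : ℝ} (hα : 0 ≤ α)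
    (hg : f x + ⟪g, z - x⟫ ≤ f z) (hp : ‖p - z‖ ≤ ‖x - α • g - z‖) :
    ‖p - z‖ ^ 2 ≤ ‖x - z‖ ^ 2 - 2 * α * (f x - f z) + α ^ 2 * ‖g‖ ^ 2 := by
  have hexpand : ‖x - α • g - z‖ ^ 2 = ‖x - z‖ ^ 2 - 2 * α * ⟪g, x - z⟫ + α ^ 2 * ‖g‖ ^ 2 := by
    rw [show x - α • g - z = (x - z) - α • g by abel, norm_sub_sq_real, real_inner_smul_right,
      norm_smul, mul_pow, Real.norm_eq_abs, sq_abs, real_inner_comm]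
    ring
  have hgap : f x - f z ≤ ⟪g, x - z⟫ := by
    rw [← neg_sub z x, inner_neg_right] at *
    linarith
  nlinarith [pow_le_pow_left₀ (norm_nonneg _) hp 2, mul_le_mul_of_nonneg_left hgap hα]

lemma sum_range_le_of_forall_le_sub {a d : ℕ → ℝ} {N : ℕ}
    (h : ∀ l < N, a (l + 1) ≤ a l - d l) (ha : 0 ≤ a N) : ∑ l ∈ range N, d l ≤ a 0 :=
  calc ∑ l ∈ range N, d l ≤ ∑ l ∈ range N, (a l - a (l + 1)) :=
        sum_le_sum fun l hl => by linarith [h l (mem_range.1 hl)]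
    _ = a 0 - a N := sum_range_sub' a N
    _ ≤ a 0 := by linarith

lemma sum_mul_sub_le_norm_sub_sq {f : E → ℝ} {x g : ℕ → E} {α : ℕ → ℝ} {z : E} {c : ℝ} {N : ℕ}
    (hsub : ∀ l < N, f (x l) + ⟪g l, z - x l⟫ ≤ f z) (hα : ∀ l < N, 0 ≤ α l)
    (hc : ∀ l < N, α l * ‖g l‖ ^ 2 = c)
    (hstep : ∀ l < N, ‖x (l + 1) - z‖ ≤ ‖x l - α l • g l - z‖) :
    ∑ l ∈ range N, α l * (2 * (f (x l) - f z) - c) ≤ ‖x 0 - z‖ ^ 2 := by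
  refine sum_range_le_of_forall_le_sub (a := fun l => ‖x l - z‖ ^ 2) (fun l hl => ?_) (sq_nonneg _)
  have := norm_sub_sq_le_of_subgradient_step_s10 (hα l hl) (hsub l hl) (hstep l hl)
  linear_combination this + α l * hc l hl

lemma sum_mul_sub_le_infDist_sq {K : Set E} (hK : Convex ℝ K) {f : E → ℝ} {x g : ℕ → E}
    {α : ℕ → ℝ} {m c : ℝ} {N : ℕ} (hOpt : {w ∈ K | f w = m}.Nonempty)
    (hsub : ∀ l < N, ∀ w ∈ K, f (x l) + ⟪g l, w - x l⟫ ≤ f w) (hα : ∀ l < N, 0 ≤ α l)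
    (hc : ∀ l < N, α l * ‖g l‖ ^ 2 = c)
    (hproj : ∀ l < N, x (l + 1) ∈ K ∧
      ∀ w ∈ K, dist (x (l + 1)) (x l - α l • g l) ≤ dist w (x l - α l • g l)) :
    ∑ l ∈ range N, α l * (2 * (f (x l) - m) - c) ≤ Metric.infDist (x 0) {w ∈ K | f w = m} ^ 2 := by
  refine le_infDist_sq_of_forall_le hOpt fun z hz => ?_
  obtain ⟨hzK, rfl⟩ := hz
  rw [dist_eq_norm]
  exact sum_mul_sub_le_norm_sub_sq (fun l hl => hsub l hl z hzK) hα hc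
    fun l hl => norm_sub_le_of_forall_dist_le hK (hproj l hl).1 (hproj l hl).2 hzK

end InnerProductSpace

lemma inf'_sub_le_of_sum_mul_le {ι : Type*} {S : Finset ι} (hS : S.Nonempty) {s α : ι → ℝ}
    {m a c D : ℝ} (ha : 0 < a) (hα : ∀ i ∈ S, a ≤ α i) (hD : 0 ≤ D)
    (h : ∑ i ∈ S, α i * (2 * (s i - m) - c) ≤ D) :
    S.inf' hS s - m ≤ D / (2 * #S * a) + c / 2 := by
  set b := S.inf' hS s
  have hcard : (0 : ℝ) < #S := by exact_mod_cast hS.card_pos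
  rcases le_or_gt (2 * (b - m) - c) 0 with hb | hb
  · have : 0 ≤ D / (2 * #S * a) := by positivity
    linarith
  have hsum : #S * a * (2 * (b - m) - c) ≤ D := calc
    #S * a * (2 * (b - m) - c) = ∑ i ∈ S, a * (2 * (b - m) - c) := by
      rw [sum_const, nsmul_eq_mul, mul_assoc]
    _ ≤ ∑ i ∈ S, α i * (2 * (s i - m) - c) := sum_le_sum fun i hi =>
      mul_le_mul (hα i hi) (by linarith [inf'_le s hi]) hb.le (ha.trans_le (hα i hi)).le
    _ ≤ D := h
  rw [div_add_div _ _ (by positivity) two_ne_zero, le_div_iff₀ (by positivity)]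
  nlinarith

theorem subgradient_descent_slb_step_general {n : ℕ} (Q : Set (EuclideanSpace ℝ (Fin n)))
    (hQcv : Convex ℝ Q)
    (f : EuclideanSpace ℝ (Fin n) → ℝ)
    (fstar : ℝ) (hattain : ∃ z ∈ Q, f z = fstar) (hmin : ∀ z ∈ Q, fstar ≤ f z)
    (fslb : ℝ) (hslb : fslb < fstar)
    (G M : ℝ)
    (hgrow : ∀ z ∈ Q, Metric.infDist z {w ∈ Q | f w = fstar} ≤ G * (f z - fslb))
    (δ F : ℝ) (hδ : δ ∈ Set.Ioo (0 : ℝ) 1) (hF : 0 < F)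
    (x g : ℕ → EuclideanSpace ℝ (Fin n)) (α : ℕ → ℝ)
    (hx0 : x 0 ∈ Q)
    (hsub : ∀ j, ∀ w ∈ Q, f (x j) + ⟪g j, w - x j⟫ ≤ f w)
    (hgM : ∀ j, ‖g j‖ ≤ M)
    (hα : ∀ j, α j = if g j = 0 then 0 else δ * (f (x 0) - fslb) / (F * ‖g j‖ ^ 2))
    (hupd : ∀ j, IsProj Q (x j - α j • g j) (x (j + 1)))
    (j : ℕ) :
    (Finset.range (j + 1)).inf' Finset.nonempty_range_add_one (fun l => f (x l)) - fslb ≤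
      fstar - fslb +
        (G ^ 2 * M ^ 2 * F / (2 * δ * ((j : ℝ) + 1)) + δ / (2 * F)) * (f (x 0) - fslb) := by
  obtain ⟨z₀, hz₀, hfz₀⟩ := hattain
  have hδ0 := hδ.1
  set A := f (x 0) - fslb
  have hA : 0 < A := by linarith [hmin _ hx0]
  by_cases hzero : ∃ l < j + 1, g l = 0
  · obtain ⟨l, hl, hgl⟩ := hzero
    have hopt : f (x l) ≤ fstar := by simpa [hgl, hfz₀] using hsub l z₀ hz₀
    have := inf'_le (fun l => f (x l)) (mem_range.2 hl)
    have : 0 ≤ (G ^ 2 * M ^ 2 * F / (2 * δ * ((j : ℝ) + 1)) + δ / (2 * F)) * A := by positivity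
    linarith
  push Not at hzero
  set c := δ * A / F
  have hM : 0 < M := (norm_pos_iff.2 (hzero 0 j.succ_pos)).trans_le (hgM 0)
  have hstepsize : ∀ l < j + 1, α l * ‖g l‖ ^ 2 = c ∧ c / M ^ 2 ≤ α l := fun l hl => by
    have hg := pow_pos (norm_pos_iff.2 (hzero l hl)) 2
    rw [hα, if_neg (hzero l hl), ← div_div]
    exact ⟨div_mul_cancel₀ c hg.ne', div_le_div_of_nonneg_left (by positivity) hg
      (pow_le_pow_left₀ (norm_nonneg _) (hgM l) 2)⟩
  have hsum : ∑ l ∈ range (j + 1), α l * (2 * (f (x l) - fstar) - c) ≤ (G * A) ^ 2 :=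
    (sum_mul_sub_le_infDist_sq hQcv ⟨z₀, hz₀, hfz₀⟩ (fun l _ => hsub l)
      (fun l hl => (by positivity : 0 ≤ c / M ^ 2).trans (hstepsize l hl).2)
      (fun l hl => (hstepsize l hl).1) fun l _ => hupd l).trans
    (pow_le_pow_left₀ Metric.infDist_nonneg (hgrow _ hx0) 2)
  have := inf'_sub_le_of_sum_mul_le nonempty_range_add_one (by positivity)
    (fun l hl => (hstepsize l (mem_range.1 hl)).2) (sq_nonneg _) hsum
  rw [card_range] at this
  convert add_le_add_left this (fstar - fslb) using 1
  · ring
  · simp only [c]; push_cast; field_simp; ring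

/-- Proposition 1: Subgradient Descent with step-sizes
`α_j = δ(f(x̂⁰) − f_slb)/(F‖g_j‖²)`. -/
theorem subgradient_descent_slb_step {n : ℕ} (Q : Set (EuclideanSpace ℝ (Fin n)))
    (hQne : Q.Nonempty) (hQcl : IsClosed Q) (hQcv : Convex ℝ Q)
    (f : EuclideanSpace ℝ (Fin n) → ℝ) (hfc : ConvexOn ℝ Q f)
    (fstar : ℝ) (hattain : ∃ z ∈ Q, f z = fstar) (hmin : ∀ z ∈ Q, fstar ≤ f z)
    (fslb : ℝ) (hslb : fslb < fstar)
    (G M : ℝ) (hG : 0 < G)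
    (hgrow : ∀ z ∈ Q, Metric.infDist z {w ∈ Q | f w = fstar} ≤ G * (f z - fslb))
    (δ F : ℝ) (hδ : δ ∈ Set.Ioo (0 : ℝ) 1) (hF : 0 < F)
    (x g : ℕ → EuclideanSpace ℝ (Fin n)) (α : ℕ → ℝ)
    (hx0 : x 0 ∈ Q)
    (hsub : ∀ j, ∀ w ∈ Q, f (x j) + ⟪g j, w - x j⟫ ≤ f w)
    (hgM : ∀ j, ‖g j‖ ≤ M)
    (hα : ∀ j, α j = if g j = 0 then 0 else δ * (f (x 0) - fslb) / (F * ‖g j‖ ^ 2))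
    (hupd : ∀ j, IsProj Q (x j - α j • g j) (x (j + 1)))
    (j : ℕ) :
    (Finset.range (j + 1)).inf' Finset.nonempty_range_add_one (fun l => f (x l)) - fslb ≤
      fstar - fslb +
        (G ^ 2 * M ^ 2 * F / (2 * δ * ((j : ℝ) + 1)) + δ / (2 * F)) * (f (x 0) - fslb) :=
  subgradient_descent_slb_step_general Q hQcv f fstar hattain hmin fslb hslb G M hgrow δ F hδ hF x g
    α hx0 hsub hgM hα hupd j
end

section
/- Let δ ∈ (0,1), B ∈ (0,1), and F > 1/(2B) be given, and run Subgradient Descent from x̂⁰ ∈ Q with step-sizes α_j := δ(f(x̂⁰) − f_slb)/(F‖g_j‖²) (with α_j := 0 if g_j = 0), where every chosen subgradient satisfies ‖g_j‖ ≤ M. Define δ' := δ/(1−δ) and W := ⌊ F M² G² / (2δ²(B − 1/(2F))) ⌋. Then either (f_b^W − f*)/(f* − f_slb) ≤ δ', or f_b^W − f_slb ≤ B·(f(x̂⁰) − f_slb), or both. -/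
open scoped RealInnerProductSpace Classical

/-!
If neither alternative holds, then with `Δ = f(x̂⁰) − f_slb` every iterate `x_k`, `k ≤ W`, has
`f(x_k) − f* > δBΔ`, so `g_k ≠ 0` and `α_k‖g_k‖² = s := δΔ/F`. For any minimiser `x*` the projected
step then gives `‖x_{k+1} − x*‖² ≤ ‖x_k − x*‖² − c` with `c = s(2δBΔ − s)/M²`, which is positive
because `F > 1/(2B)`. By the growth condition some minimiser has `‖x̂⁰ − x*‖² < (W + 1)c`, since `W`
is chosen so that `(W + 1)c > G²Δ²`; so `W + 1` steps would make a squared distance negative.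
-/

section InnerProductSpace

variable {E : Type*} [NormedAddCommGroup E] [InnerProductSpace ℝ E]

theorem norm_sub_div_smul_sub_sq_le {x y g : E} (hg : g ≠ 0) {a s d M : ℝ}
    (ha : a ≤ ⟪g, x - y⟫) (hs : 0 ≤ s) (hd : 0 ≤ d) (hsd : d ≤ 2 * a - s) (hgM : ‖g‖ ≤ M) :
    ‖x - (s / ‖g‖ ^ 2) • g - y‖ ^ 2 ≤ ‖x - y‖ ^ 2 - s * d / M ^ 2 := by
  have hg2 : 0 < ‖g‖ ^ 2 := by positivity
  have hexpand : ‖x - (s / ‖g‖ ^ 2) • g - y‖ ^ 2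
      = ‖x - y‖ ^ 2 - s / ‖g‖ ^ 2 * (2 * ⟪g, x - y⟫ - s) := by
    rw [sub_right_comm, norm_sub_sq_real, real_inner_smul_right, norm_smul, mul_pow,
      Real.norm_eq_abs, sq_abs, real_inner_comm]
    field_simp
    ring
  have hdecrease : s * d / M ^ 2 ≤ s / ‖g‖ ^ 2 * (2 * ⟪g, x - y⟫ - s) :=
    calc s * d / M ^ 2 ≤ s * d / ‖g‖ ^ 2 :=
          div_le_div_of_nonneg_left (by positivity) hg2 (pow_le_pow_left₀ (norm_nonneg _) hgM 2)
      _ = s / ‖g‖ ^ 2 * d := by ring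
      _ ≤ s / ‖g‖ ^ 2 * (2 * ⟪g, x - y⟫ - s) :=
          mul_le_mul_of_nonneg_left (by linarith) (by positivity)
  linarith

def IsSubgradientOn (Q : Set E) (f : E → ℝ) (x g : E) : Prop :=
  ∀ w ∈ Q, f x + ⟪g, w - x⟫ ≤ f w

theorem IsSubgradientOn.sub_le_inner {Q : Set E} {f : E → ℝ} {x g z : E}
    (h : IsSubgradientOn Q f x g) (hz : z ∈ Q) : f x - f z ≤ ⟪g, x - z⟫ := by
  have := h z hz
  rw [← neg_sub, inner_neg_right] at this
  linarith

theorem IsSubgradientOn.ne_zero_of_lt {Q : Set E} {f : E → ℝ} {x g z : E}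
    (h : IsSubgradientOn Q f x g) (hz : z ∈ Q) (hlt : f z < f x) : g ≠ 0 := by
  rintro rfl
  have := h.sub_le_inner hz
  rw [inner_zero_left] at this
  linarith

end InnerProductSpace

theorem Metric.exists_dist_sq_lt_of_infDist_sq_lt {X : Type*} [PseudoMetricSpace X] {s : Set X}
    {x : X} {r : ℝ} (hs : s.Nonempty) (h : infDist x s ^ 2 < r) : ∃ y ∈ s, dist x y ^ 2 < r := by
  obtain ⟨y, hy, hxy⟩ := (infDist_lt_iff hs).1 ((Real.lt_sqrt infDist_nonneg).2 h)
  exact ⟨y, hy, (Real.lt_sqrt dist_nonneg).1 hxy⟩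

theorem le_sub_mul_of_forall_le_sub {u : ℕ → ℝ} {c : ℝ} {N : ℕ}
    (h : ∀ k < N, u (k + 1) ≤ u k - c) : u N ≤ u 0 - N * c := by
  induction N with
  | zero => simp
  | succ N ih =>
    have := h N N.lt_succ_self
    have := ih fun k hk => h k (hk.trans N.lt_succ_self)
    push_cast
    linarith

theorem mul_le_of_forall_le_sub {u : ℕ → ℝ} {c : ℝ} {N : ℕ} (hN : 0 ≤ u N)
    (h : ∀ k < N, u (k + 1) ≤ u k - c) : N * c ≤ u 0 := by
  linarith [le_sub_mul_of_forall_le_sub h]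

theorem div_one_sub_lt_div_iff {δ v fstar fslb : ℝ} (hδ : δ < 1) (hslb : fslb < fstar) :
    δ / (1 - δ) < (v - fstar) / (fstar - fslb) ↔ δ * (v - fslb) < v - fstar := by
  rw [div_lt_div_iff₀ (by linarith) (by linarith)]
  constructor <;> intro h <;> linarith

theorem sq_mul_lt_floor_add_one_mul {G M δ B F Δ : ℝ} (hδ : 0 < δ) (hΔ : 0 < Δ) (hM : 0 < M)
    (hF : 0 < F) (hBF : 1 < F * (2 * B)) (hd : 0 < 2 * (δ * (B * Δ)) - δ * Δ / F) :
    (G * Δ) ^ 2 < (⌊F * M ^ 2 * G ^ 2 / (2 * δ ^ 2 * (B - 1 / (2 * F)))⌋₊ + 1) *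
      (δ * Δ / F * (2 * (δ * (B * Δ)) - δ * Δ / F) / M ^ 2) := by
  have hc : 0 < δ * Δ / F * (2 * (δ * (B * Δ)) - δ * Δ / F) / M ^ 2 := by positivity
  calc (G * Δ) ^ 2
      = F * M ^ 2 * G ^ 2 / (2 * δ ^ 2 * (B - 1 / (2 * F))) *
          (δ * Δ / F * (2 * (δ * (B * Δ)) - δ * Δ / F) / M ^ 2) := by
        have : F * 2 * B - 1 ≠ 0 := by linarith [mul_assoc F 2 B]
        field_simp
    _ < _ := mul_lt_mul_of_pos_right (Nat.lt_floor_add_one _) hc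

section Projection

variable {n : ℕ} {Q : Set (EuclideanSpace ℝ (Fin n))} {u p w : EuclideanSpace ℝ (Fin n)}

theorem IsProj.inner_sub_nonpos_s11 (hQ : Convex ℝ Q) (hp : IsProj Q u p) (hw : w ∈ Q) :
    ⟪u - p, w - p⟫ ≤ 0 := by
  refine (norm_eq_iInf_iff_real_inner_le_zero hQ hp.1).1 ?_ w hw
  have : Nonempty Q := ⟨⟨p, hp.1⟩⟩
  refine le_antisymm (le_ciInf fun w => ?_)
    (ciInf_le ⟨0, by rintro _ ⟨w, rfl⟩; exact norm_nonneg _⟩ (⟨p, hp.1⟩ : Q))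
  rw [← dist_eq_norm, ← dist_eq_norm, dist_comm, dist_comm u]
  exact hp.2 w w.2

theorem IsProj.norm_sub_sq_le_s11 (hQ : Convex ℝ Q) (hp : IsProj Q u p) (hw : w ∈ Q) :
    ‖p - w‖ ^ 2 ≤ ‖u - w‖ ^ 2 := by
  have h := hp.inner_sub_nonpos_s11 hQ hw
  rw [show u - w = (u - p) - (w - p) by abel, norm_sub_sq_real (u - p), norm_sub_rev p w]
  nlinarith [sq_nonneg ‖u - p‖]

theorem IsProj.norm_sub_sq_le_of_isSubgradientOn (hQ : Convex ℝ Q)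
    {f : EuclideanSpace ℝ (Fin n) → ℝ} {x g : EuclideanSpace ℝ (Fin n)} {s d M : ℝ}
    (hsub : IsSubgradientOn Q f x g) (hg : g ≠ 0)
    (hp : IsProj Q (x - (s / ‖g‖ ^ 2) • g) p) (hw : w ∈ Q) (hs : 0 ≤ s) (hd : 0 ≤ d)
    (hgap : d + s ≤ 2 * (f x - f w)) (hgM : ‖g‖ ≤ M) :
    ‖p - w‖ ^ 2 ≤ ‖x - w‖ ^ 2 - s * d / M ^ 2 :=
  (hp.norm_sub_sq_le_s11 hQ hw).trans <| norm_sub_div_smul_sub_sq_le hg (hsub.sub_le_inner hw) hs hd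
    (by linarith) hgM

end Projection

theorem subgradient_descent_slb_dichotomy_general {n : ℕ} (Q : Set (EuclideanSpace ℝ (Fin n)))
    (hQcv : Convex ℝ Q)
    (f : EuclideanSpace ℝ (Fin n) → ℝ)
    (fstar : ℝ) (hattain : ∃ z ∈ Q, f z = fstar) (hmin : ∀ z ∈ Q, fstar ≤ f z)
    (fslb : ℝ) (hslb : fslb < fstar)
    (G M : ℝ)
    (hgrow : ∀ z ∈ Q, Metric.infDist z {w ∈ Q | f w = fstar} ≤ G * (f z - fslb))
    (δ B F : ℝ) (hδ : δ ∈ Set.Ioo (0 : ℝ) 1) (hB : B ∈ Set.Ioo (0 : ℝ) 1)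
    (hF : 1 / (2 * B) < F)
    (x g : ℕ → EuclideanSpace ℝ (Fin n)) (α : ℕ → ℝ)
    (hx0 : x 0 ∈ Q)
    (hsub : ∀ j, ∀ w ∈ Q, f (x j) + ⟪g j, w - x j⟫ ≤ f w)
    (hgM : ∀ j, ‖g j‖ ≤ M)
    (hα : ∀ j, α j = if g j = 0 then 0 else δ * (f (x 0) - fslb) / (F * ‖g j‖ ^ 2))
    (hupd : ∀ j, IsProj Q (x j - α j • g j) (x (j + 1))) :
    ((Finset.range (⌊F * M ^ 2 * G ^ 2 / (2 * δ ^ 2 * (B - 1 / (2 * F)))⌋₊ + 1)).inf'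
        Finset.nonempty_range_add_one (fun l => f (x l)) - fstar) / (fstar - fslb) ≤ δ / (1 - δ) ∨
    (Finset.range (⌊F * M ^ 2 * G ^ 2 / (2 * δ ^ 2 * (B - 1 / (2 * F)))⌋₊ + 1)).inf'
        Finset.nonempty_range_add_one (fun l => f (x l)) - fslb ≤ B * (f (x 0) - fslb) := by
  obtain ⟨hδ0, hδ1⟩ := hδ
  obtain ⟨hB0, -⟩ := hB
  set W := ⌊F * M ^ 2 * G ^ 2 / (2 * δ ^ 2 * (B - 1 / (2 * F)))⌋₊
  set Δ := f (x 0) - fslb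
  have hΔ : 0 < Δ := by linarith [hmin _ hx0]
  have hF0 : 0 < F := lt_trans (by positivity) hF
  have hBF : 1 < F * (2 * B) := (div_lt_iff₀ (by positivity)).1 hF
  have hd : 0 < 2 * (δ * (B * Δ)) - δ * Δ / F := by
    rw [sub_pos, div_lt_iff₀ hF0]
    nlinarith [mul_pos hδ0 hΔ]
  rw [or_iff_not_imp_left, not_le, div_one_sub_lt_div_iff hδ1 hslb]
  intro hrel
  by_contra! hshrunk
  have hfar (k : ℕ) (hk : k < W + 1) : fstar + δ * (B * Δ) < f (x k) := by
    have := Finset.inf'_le (fun l => f (x l)) (Finset.mem_range.2 hk)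
    nlinarith [mul_lt_mul_of_pos_left hshrunk hδ0]
  obtain ⟨z, hz, hfz⟩ := hattain
  have hg (k : ℕ) (hk : k < W + 1) : g k ≠ 0 := IsSubgradientOn.ne_zero_of_lt (hsub k) hz
    (by rw [hfz]; linarith [hfar k hk, mul_pos hδ0 (mul_pos hB0 hΔ)])
  have hM : 0 < M := (norm_pos_iff.2 (hg 0 W.succ_pos)).trans_le (hgM 0)
  obtain ⟨xs, ⟨hxsQ, hfxs⟩, hxs0⟩ := Metric.exists_dist_sq_lt_of_infDist_sq_lt
    (s := {w ∈ Q | f w = fstar}) ⟨z, hz, hfz⟩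
    ((pow_le_pow_left₀ Metric.infDist_nonneg (hgrow _ hx0) 2).trans_lt
      (sq_mul_lt_floor_add_one_mul hδ0 hΔ hM hF0 hBF hd))
  refine (mul_le_of_forall_le_sub (u := fun k => ‖x k - xs‖ ^ 2) (N := W + 1) (sq_nonneg _)
    fun k hk => ?_).not_gt (by rwa [dist_eq_norm, ← Nat.cast_succ] at hxs0)
  have hαk : α k = δ * Δ / F / ‖g k‖ ^ 2 := by rw [hα, if_neg (hg k hk), div_div, mul_comm F]
  exact (hαk ▸ hupd k).norm_sub_sq_le_of_isSubgradientOn hQcv (hsub k) (hg k hk) hxsQ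
    (by positivity) hd.le (by linarith [hfar k hk]) (hgM k)

/-- Proposition 2: after `W` iterations of Subgradient Descent with
step-sizes `α_j = δ(f(x̂⁰) − f_slb)/(F‖g_j‖²)`, either a `δ'`-relative solution is found or
the bound gap has shrunk by the factor `B`. -/
theorem subgradient_descent_slb_dichotomy {n : ℕ} (Q : Set (EuclideanSpace ℝ (Fin n)))
    (hQne : Q.Nonempty) (hQcl : IsClosed Q) (hQcv : Convex ℝ Q)
    (f : EuclideanSpace ℝ (Fin n) → ℝ) (hfc : ConvexOn ℝ Q f)
    (fstar : ℝ) (hattain : ∃ z ∈ Q, f z = fstar) (hmin : ∀ z ∈ Q, fstar ≤ f z)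
    (fslb : ℝ) (hslb : fslb < fstar)
    (G M : ℝ) (hG : 0 < G)
    (hgrow : ∀ z ∈ Q, Metric.infDist z {w ∈ Q | f w = fstar} ≤ G * (f z - fslb))
    (δ B F : ℝ) (hδ : δ ∈ Set.Ioo (0 : ℝ) 1) (hB : B ∈ Set.Ioo (0 : ℝ) 1)
    (hF : 1 / (2 * B) < F)
    (x g : ℕ → EuclideanSpace ℝ (Fin n)) (α : ℕ → ℝ)
    (hx0 : x 0 ∈ Q)
    (hsub : ∀ j, ∀ w ∈ Q, f (x j) + ⟪g j, w - x j⟫ ≤ f w)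
    (hgM : ∀ j, ‖g j‖ ≤ M)
    (hα : ∀ j, α j = if g j = 0 then 0 else δ * (f (x 0) - fslb) / (F * ‖g j‖ ^ 2))
    (hupd : ∀ j, IsProj Q (x j - α j • g j) (x (j + 1))) :
    ((Finset.range (⌊F * M ^ 2 * G ^ 2 / (2 * δ ^ 2 * (B - 1 / (2 * F)))⌋₊ + 1)).inf'
        Finset.nonempty_range_add_one (fun l => f (x l)) - fstar) / (fstar - fslb) ≤ δ / (1 - δ) ∨
    (Finset.range (⌊F * M ^ 2 * G ^ 2 / (2 * δ ^ 2 * (B - 1 / (2 * F)))⌋₊ + 1)).inf'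
        Finset.nonempty_range_add_one (fun l => f (x l)) - fslb ≤ B * (f (x 0) - fslb) :=
  subgradient_descent_slb_dichotomy_general Q hQcv f fstar hattain hmin fslb hslb G M hgrow δ B F hδ
    hB hF x g α hx0 hsub hgM hα hupd
end

section
/- Let B ∈ (0,1) and ε̄' > 0 be given, and let x_{1,0}, x_{2,0}, …, x_{q,0} ∈ Q with x_{1,0} = x⁰ satisfy f(x_{i+1,0}) − f_slb ≤ B·(f(x_{i,0}) − f_slb) for all 1 ≤ i ≤ q−1. Let m denote the number of indices i ∈ {1,…,q} for which (f(x_{i,0}) − f_slb)/(f* − f_slb) > (1+ε̄')/B. Then m ≤ max{ 0, ⌈ ( ln(1 + (f(x⁰) − f*)/(f* − f_slb)) − ln((1+ε̄')/B) ) / ln(1/B) ⌉ }. -/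
/-- Proposition 5: bound on the number of restart points with large
bound gap. -/
theorem restart_large_gap_count {n : ℕ} (Q : Set (EuclideanSpace ℝ (Fin n)))
    (hQne : Q.Nonempty) (hQcl : IsClosed Q) (hQcv : Convex ℝ Q)
    (f : EuclideanSpace ℝ (Fin n) → ℝ) (hfc : ConvexOn ℝ Q f)
    (fstar : ℝ) (hattain : ∃ z ∈ Q, f z = fstar) (hmin : ∀ z ∈ Q, fstar ≤ f z)
    (fslb : ℝ) (hslb : fslb < fstar)
    (B εb' : ℝ) (hB : B ∈ Set.Ioo (0 : ℝ) 1) (hεb' : 0 < εb')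
    (q : ℕ) (x : ℕ → EuclideanSpace ℝ (Fin n))
    (x0 : EuclideanSpace ℝ (Fin n)) (hx0 : x0 ∈ Q) (hx1 : x 1 = x0)
    (hmem : ∀ i, 1 ≤ i → i ≤ q → x i ∈ Q)
    (hdec : ∀ i, 1 ≤ i → i + 1 ≤ q → f (x (i + 1)) - fslb ≤ B * (f (x i) - fslb)) :
    (((Finset.Icc 1 q).filter
        (fun i => (1 + εb') / B < (f (x i) - fslb) / (fstar - fslb))).card : ℤ) ≤
      max 0 ⌈(Real.log (1 + (f x0 - fstar) / (fstar - fslb)) - Real.log ((1 + εb') / B)) /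
        Real.log (1 / B)⌉ := by
  obtain ⟨hB0, hB1⟩ := hB
  set D := fstar - fslb with hDdef
  have hD : 0 < D := by simp [hDdef]; linarith
  have hg1 : 0 < f x0 - fslb := by have := hmin x0 hx0; linarith
  set R : ℝ := (Real.log (1 + (f x0 - fstar) / D) - Real.log ((1 + εb') / B)) /
      Real.log (1 / B) with hRdef
  have hlogB : 0 < Real.log (1 / B) := by
    apply Real.log_pos
    rw [lt_div_iff₀ hB0]; linarith
  -- key decay bound
  have key : ∀ i, 1 ≤ i → i ≤ q → f (x i) - fslb ≤ B ^ (i - 1) * (f x0 - fslb) := by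
    intro i hi
    induction i, hi using Nat.le_induction with
    | base => intro _; simp [hx1]
    | succ i hi ih =>
      intro hiq
      have h1 := hdec i hi (by omega)
      have h2 := ih (by omega)
      have : B * (f (x i) - fslb) ≤ B * (B ^ (i - 1) * (f x0 - fslb)) :=
        mul_le_mul_of_nonneg_left h2 hB0.le
      have hpow : B * B ^ (i - 1) = B ^ (i + 1 - 1) := by
        rw [← pow_succ']
        congr 1
        omega
      calc f (x (i + 1)) - fslb ≤ B * (f (x i) - fslb) := h1
        _ ≤ B * (B ^ (i - 1) * (f x0 - fslb)) := this
        _ = B ^ (i + 1 - 1) * (f x0 - fslb) := by rw [← mul_assoc, hpow]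
  -- each index in the filter is at most ⌈R⌉
  have hbound : ∀ i ∈ (Finset.Icc 1 q).filter
      (fun i => (1 + εb') / B < (f (x i) - fslb) / D), (i : ℤ) ≤ ⌈R⌉ := by
    intro i hi
    rw [Finset.mem_filter, Finset.mem_Icc] at hi
    obtain ⟨⟨hi1, hiq⟩, hcond⟩ := hi
    have hk := key i hi1 hiq
    have hlt : (1 + εb') / B < B ^ (i - 1) * ((f x0 - fslb) / D) := by
      calc (1 + εb') / B < (f (x i) - fslb) / D := hcond
        _ ≤ B ^ (i - 1) * (f x0 - fslb) / D := by gcongr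
        _ = B ^ (i - 1) * ((f x0 - fslb) / D) := by ring
    have hLpos : 0 < (1 + εb') / B := by positivity
    have hlog := Real.log_lt_log hLpos hlt
    rw [Real.log_mul (by positivity) (by positivity), Real.log_pow] at hlog
    have hlogB' : Real.log (1 / B) = -Real.log B := by
      rw [Real.log_div one_ne_zero hB0.ne', Real.log_one]; ring
    have hratio : (f x0 - fslb) / D = 1 + (f x0 - fstar) / D := by
      field_simp
      rw [hDdef]; ring
    have hcast : ((i - 1 : ℕ) : ℝ) = (i : ℝ) - 1 := by
      have h1 : (1 : ℕ) ≤ i := hi1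
      push_cast [Nat.cast_sub h1]
      ring
    have hRlt : ((i : ℝ) - 1) < R := by
      rw [hRdef, lt_div_iff₀ hlogB, hlogB', ← hratio]
      rw [hratio, ← hratio] at hlog
      nlinarith [hlog, hcast]
    have : ((i : ℤ) - 1) < ⌈R⌉ := by
      rw [Int.lt_ceil]
      push_cast
      exact hRlt
    omega
  -- conclude via subset of Icc 1 m
  set m : ℕ := (max 0 ⌈R⌉).toNat with hm
  have hsub : (Finset.Icc 1 q).filter
      (fun i => (1 + εb') / B < (f (x i) - fslb) / D) ⊆ Finset.Icc 1 m := by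
    intro i hi
    have h1 : 1 ≤ i := by
      rw [Finset.mem_filter, Finset.mem_Icc] at hi; exact hi.1.1
    have h2 := hbound i hi
    rw [Finset.mem_Icc]
    refine ⟨h1, ?_⟩
    have : (i : ℤ) ≤ max 0 ⌈R⌉ := le_trans h2 (le_max_right _ _)
    omega
  calc (((Finset.Icc 1 q).filter
      (fun i => (1 + εb') / B < (f (x i) - fslb) / D)).card : ℤ)
      ≤ ((Finset.Icc 1 m).card : ℤ) := by
        exact_mod_cast Finset.card_le_card hsub
    _ = (m : ℤ) := by rw [Nat.card_Icc]; push_cast; omega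
    _ = max 0 ⌈R⌉ := by rw [hm]; exact Int.toNat_of_nonneg (le_max_left _ _)
end

section
/- In the restart framework: (a) if K_i < +∞ for all i = 1, …, q, then q ≤ ⌊ ln(1 + (f(x⁰) − f*)/(f* − f_slb)) / ln(1/B) ⌋; and (b) if both K_i and K_{i+1} are finite for some i ≥ 1, then K_i ≤ J_i. -/
/-!
Write `dᵢ = f(x_{i,0}) - f_slb` for the gap at the start of the `i`-th restart. A finite `K_i`
means the run stops at a point whose gap is below `B dᵢ`, and that point starts the next restart,
so `d_{i+1} < B dᵢ`; on the other hand every gap is at least `f* - f_slb > 0`. Hence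
`f* - f_slb ≤ B^q d₁` after `q` finite restarts, which is (a) after taking logarithms.
For (b), if `J_i < K_i` then the guarantee at `J_i` and the threshold test give
`B dᵢ ≤ f* - f_slb + v dᵢ`, while two consecutive finite restarts give
`f* - f_slb < B d_{i+1} < B² dᵢ`; together these contradict `v ≤ B - B²`.
-/

open Real

theorem le_floor_log_div_log_inv_of_le_pow_mul {B c D : ℝ} {q : ℕ} (hB : 0 < B) (hB1 : B < 1)
    (hc : 0 < c) (h : c ≤ B ^ q * D) : (q : ℤ) ≤ ⌊log (D / c) / log (1 / B)⌋ := by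
  have hlogB : 0 < log (1 / B) := log_pos (by rwa [lt_div_iff₀ hB, one_mul])
  have hpow : (1 / B) ^ q ≤ D / c := by
    rw [div_pow, one_pow, div_le_div_iff₀ (pow_pos hB q) hc]
    linarith
  rw [Int.le_floor, Int.cast_natCast, le_div_iff₀ hlogB, ← log_pow]
  exact log_le_log (by positivity) hpow

structure RestartRun {X : Type*} (Q : Set X) (f : X → ℝ) (fstar fslb B : ℝ)
    (x : ℕ → ℕ → X) (K : ℕ → ℕ∞) : Prop where
  min_le : ∀ z ∈ Q, fstar ≤ f z
  slb_lt : fslb < fstar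
  mem : ∀ i j : ℕ, 1 ≤ i → (j : ℕ∞) ≤ K i → x i j ∈ Q
  le_ratio : ∀ i j : ℕ, 1 ≤ i → (j : ℕ∞) < K i → B ≤ (f (x i j) - fslb) / (f (x i 0) - fslb)
  ratio_lt : ∀ i j : ℕ, 1 ≤ i → K i = (j : ℕ∞) → (f (x i j) - fslb) / (f (x i 0) - fslb) < B
  restart : ∀ i j : ℕ, 1 ≤ i → K i = (j : ℕ∞) → x (i + 1) 0 = x i j

namespace RestartRun

variable {X : Type*} {Q : Set X} {f : X → ℝ} {fstar fslb B : ℝ} {x : ℕ → ℕ → X} {K : ℕ → ℕ∞}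
  {i : ℕ}

theorem sub_le_gap (h : RestartRun Q f fstar fslb B x K) {j : ℕ} (hi : 1 ≤ i)
    (hj : (j : ℕ∞) ≤ K i) : fstar - fslb ≤ f (x i j) - fslb := by
  linarith [h.min_le _ (h.mem i j hi hj)]

theorem gap_pos (h : RestartRun Q f fstar fslb B x K) (hi : 1 ≤ i) : 0 < f (x i 0) - fslb :=
  (sub_pos.2 h.slb_lt).trans_le (h.sub_le_gap hi zero_le)

theorem exists_eq_gap_lt (h : RestartRun Q f fstar fslb B x K) (hi : 1 ≤ i) (hK : K i ≠ ⊤) :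
    ∃ j : ℕ, K i = j ∧ f (x i j) - fslb < B * (f (x i 0) - fslb) := by
  obtain ⟨j, hj⟩ := WithTop.ne_top_iff_exists.mp hK
  exact ⟨j, hj.symm, (div_lt_iff₀ (h.gap_pos hi)).1 (h.ratio_lt i j hi hj.symm)⟩

theorem gap_succ_lt (h : RestartRun Q f fstar fslb B x K) (hi : 1 ≤ i) (hK : K i ≠ ⊤) :
    f (x (i + 1) 0) - fslb < B * (f (x i 0) - fslb) := by
  obtain ⟨j, hj, hlt⟩ := h.exists_eq_gap_lt hi hK
  rwa [h.restart i j hi hj]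

theorem sub_lt_mul_gap (h : RestartRun Q f fstar fslb B x K) (hi : 1 ≤ i) (hK : K i ≠ ⊤) :
    fstar - fslb < B * (f (x i 0) - fslb) := by
  obtain ⟨j, hj, hlt⟩ := h.exists_eq_gap_lt hi hK
  exact (h.sub_le_gap hi hj.ge).trans_lt hlt

theorem sub_le_pow_mul_gap_one (h : RestartRun Q f fstar fslb B x K) (hB : 0 ≤ B) {q : ℕ}
    (hK : ∀ i : ℕ, 1 ≤ i → i ≤ q → K i ≠ ⊤) :
    fstar - fslb ≤ B ^ q * (f (x 1 0) - fslb) := by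
  have hgeom := le_geom (u := fun k ↦ f (x (k + 1) 0) - fslb) hB q fun k hk ↦
    (h.gap_succ_lt (Nat.le_add_left 1 k) (hK (k + 1) (Nat.le_add_left 1 k) hk)).le
  exact (h.sub_le_gap (Nat.le_add_left 1 q) zero_le).trans hgeom

theorem le_of_ne_top_of_succ_ne_top (h : RestartRun Q f fstar fslb B x K) (hB : 0 < B)
    {v : ℝ} (hBv : v ≤ B - B ^ 2) {J : ℕ} (hi : 1 ≤ i)
    (hJ : (J : ℕ∞) ≤ K i → f (x i J) - fstar ≤ v * (f (x i 0) - fslb))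
    (hK : K i ≠ ⊤) (hK' : K (i + 1) ≠ ⊤) : K i ≤ J := by
  by_contra! hJK
  have hd := h.gap_pos hi
  have hnext := h.sub_lt_mul_gap (Nat.le_add_left 1 i) hK'
  have hstep := mul_lt_mul_of_pos_left (h.gap_succ_lt hi hK) hB
  have hthreshold := (le_div_iff₀ hd).1 (h.le_ratio i J hi hJK)
  linarith [mul_le_mul_of_nonneg_right hBv hd.le, hJ hJK.le]

end RestartRun

theorem restart_framework_counts_general {n : ℕ} (Q : Set (EuclideanSpace ℝ (Fin n)))
    (f : EuclideanSpace ℝ (Fin n) → ℝ)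
    (fstar : ℝ) (hmin : ∀ z ∈ Q, fstar ≤ f z)
    (fslb : ℝ) (hslb : fslb < fstar)
    (B v : ℝ) (hB : 0 < B) (hv : 0 < v) (hBv : v ≤ B - B ^ 2)
    (x y : ℕ → ℕ → EuclideanSpace ℝ (Fin n)) (K : ℕ → ℕ∞)
    (x0 : EuclideanSpace ℝ (Fin n))
    (hx10 : x 1 0 = x0)
    (hmem : ∀ i j : ℕ, 1 ≤ i → (j : ℕ∞) ≤ K i → x i j ∈ Q ∧ y i j ∈ Q)
    (hKlt : ∀ i j : ℕ, 1 ≤ i → (j : ℕ∞) < K i →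
      B ≤ (f (x i j) - fslb) / (f (x i 0) - fslb))
    (hKeq : ∀ i j : ℕ, 1 ≤ i → K i = (j : ℕ∞) →
      (f (x i j) - fslb) / (f (x i 0) - fslb) < B)
    (hrestart : ∀ i j : ℕ, 1 ≤ i → K i = (j : ℕ∞) →
      x (i + 1) 0 = x i j ∧ y (i + 1) 0 = x i j)
    (J : ℕ → ℕ)
    (hJ : ∀ i k : ℕ, 1 ≤ i → J i ≤ k → (k : ℕ∞) ≤ K i →
      f (x i k) - fstar ≤ v * (f (x i 0) - fslb)) :
    (∀ q : ℕ, (∀ i : ℕ, 1 ≤ i → i ≤ q → K i ≠ ⊤) →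
      (q : ℤ) ≤ ⌊Real.log (1 + (f x0 - fstar) / (fstar - fslb)) / Real.log (1 / B)⌋) ∧
    (∀ i : ℕ, 1 ≤ i → K i ≠ ⊤ → K (i + 1) ≠ ⊤ → K i ≤ (J i : ℕ∞)) := by
  have run : RestartRun Q f fstar fslb B x K :=
    ⟨hmin, hslb, fun i j hi hj ↦ (hmem i j hi hj).1, hKlt, hKeq,
      fun i j hi hj ↦ (hrestart i j hi hj).1⟩
  have hB1 : B < 1 := by nlinarith
  have hc : 0 < fstar - fslb := sub_pos.2 hslb
  refine ⟨fun q hK ↦ ?_, fun i hi hK hK' ↦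
    run.le_of_ne_top_of_succ_ne_top hB hBv hi (hJ i (J i) hi le_rfl) hK hK'⟩
  have hratio : 1 + (f x0 - fstar) / (fstar - fslb) = (f x0 - fslb) / (fstar - fslb) := by
    field_simp
    ring
  rw [hratio, ← hx10]
  exact le_floor_log_div_log_inv_of_le_pow_mul hB hB1 hc (run.sub_le_pow_mul_gap_one hB.le hK)

/-- Proposition: in the restart framework, (a) the number of finite
restarts is bounded, and (b) `K_i ≤ J_i` whenever `K_i` and `K_{i+1}` are finite. -/
theorem restart_framework_counts {n : ℕ} (Q : Set (EuclideanSpace ℝ (Fin n)))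
    (hQne : Q.Nonempty) (hQcl : IsClosed Q) (hQcv : Convex ℝ Q)
    (f : EuclideanSpace ℝ (Fin n) → ℝ) (hfc : ConvexOn ℝ Q f)
    (fstar : ℝ) (hattain : ∃ z ∈ Q, f z = fstar) (hmin : ∀ z ∈ Q, fstar ≤ f z)
    (fslb : ℝ) (hslb : fslb < fstar)
    (B v ε' : ℝ) (hB : 0 < B) (hv : 0 < v) (hBv : v ≤ B - B ^ 2) (hB2v : 2 * v ≤ B)
    (hε' : 0 < ε')
    (x y : ℕ → ℕ → EuclideanSpace ℝ (Fin n)) (K : ℕ → ℕ∞)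
    (x0 : EuclideanSpace ℝ (Fin n)) (hx0 : x0 ∈ Q)
    (hx10 : x 1 0 = x0) (hy10 : y 1 0 = x0)
    (hmem : ∀ i j : ℕ, 1 ≤ i → (j : ℕ∞) ≤ K i → x i j ∈ Q ∧ y i j ∈ Q)
    (hKlt : ∀ i j : ℕ, 1 ≤ i → (j : ℕ∞) < K i →
      B ≤ (f (x i j) - fslb) / (f (x i 0) - fslb))
    (hKeq : ∀ i j : ℕ, 1 ≤ i → K i = (j : ℕ∞) →
      (f (x i j) - fslb) / (f (x i 0) - fslb) < B)
    (hrestart : ∀ i j : ℕ, 1 ≤ i → K i = (j : ℕ∞) →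
      x (i + 1) 0 = x i j ∧ y (i + 1) 0 = x i j)
    (J I : ℕ → ℕ)
    (hJ : ∀ i k : ℕ, 1 ≤ i → J i ≤ k → (k : ℕ∞) ≤ K i →
      f (x i k) - fstar ≤ v * (f (x i 0) - fslb))
    (hI : ∀ i k : ℕ, 1 ≤ i → I i ≤ k → (k : ℕ∞) ≤ K i →
      f (y i k) - fstar ≤ v * ε' * (f (x i 0) - fslb)) :
    (∀ q : ℕ, (∀ i : ℕ, 1 ≤ i → i ≤ q → K i ≠ ⊤) →
      (q : ℤ) ≤ ⌊Real.log (1 + (f x0 - fstar) / (fstar - fslb)) / Real.log (1 / B)⌋) ∧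
    (∀ i : ℕ, 1 ≤ i → K i ≠ ⊤ → K (i + 1) ≠ ⊤ → K i ≤ (J i : ℕ∞)) :=
  restart_framework_counts_general Q f fstar hmin fslb hslb B v hB hv hBv x y K x0 hx10 hmem hKlt
    hKeq hrestart J hJ
end

section
/- In the restart framework, let i be an outer index. If j ≥ J_i and x_{i,j+1} is defined (i.e., K_i ≥ j+1), then (f(x_{i,0}) − f_slb)/(f* − f_slb) ≤ 1/(B − v). If moreover j ≥ I_i, then (f(y_{i,j}) − f*)/(f* − f_slb) ≤ ε'. -/
/-!
Since `x_{i,j+1}` is defined, `j < K_i`, so the restart test did not fire at `j`: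
`f(x_{i,j}) - f_slb ≥ B (f(x_{i,0}) - f_slb)`. Together with
`f(x_{i,j}) - f* ≤ v (f(x_{i,0}) - f_slb)` this gives `(B - v)(f(x_{i,0}) - f_slb) ≤ f* - f_slb`,
which is the first claim. As `v ≤ B - v`, it also gives `v (f(x_{i,0}) - f_slb) ≤ f* - f_slb`,
which turns the bound `f(y_{i,j}) - f* ≤ v ε' (f(x_{i,0}) - f_slb)` into the second claim.
-/

section RestartBounds

variable {fstar fslb a b c B v ε : ℝ}

theorem restart_gap_le (ha : fslb < a) (hB : B ≤ (b - fslb) / (a - fslb))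
    (hb : b - fstar ≤ v * (a - fslb)) : (B - v) * (a - fslb) ≤ fstar - fslb := by
  rw [le_div_iff₀ (sub_pos.2 ha)] at hB
  linarith

theorem restart_ratio_le (hslb : fslb < fstar) (hvB : v < B)
    (hgap : (B - v) * (a - fslb) ≤ fstar - fslb) :
    (a - fslb) / (fstar - fslb) ≤ 1 / (B - v) := by
  rw [div_le_div_iff₀ (sub_pos.2 hslb) (sub_pos.2 hvB)]
  linarith

theorem relative_error_le (hslb : fslb < fstar) (ha : fslb ≤ a) (hvB : 2 * v ≤ B) (hε : 0 ≤ ε)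
    (hgap : (B - v) * (a - fslb) ≤ fstar - fslb) (hc : c - fstar ≤ v * ε * (a - fslb)) :
    (c - fstar) / (fstar - fslb) ≤ ε := by
  have hva : v * (a - fslb) ≤ fstar - fslb := by nlinarith
  rw [div_le_iff₀ (sub_pos.2 hslb)]
  nlinarith

end RestartBounds

theorem restart_framework_relative_solution_general {n : ℕ} (Q : Set (EuclideanSpace ℝ (Fin n)))
    (f : EuclideanSpace ℝ (Fin n) → ℝ)
    (fstar : ℝ) (hmin : ∀ z ∈ Q, fstar ≤ f z)
    (fslb : ℝ) (hslb : fslb < fstar)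
    (B v ε' : ℝ) (hv : 0 < v) (hB2v : 2 * v ≤ B)
    (hε' : 0 < ε')
    (x y : ℕ → ℕ → EuclideanSpace ℝ (Fin n)) (K : ℕ → ℕ∞)
    (hmem : ∀ i j : ℕ, 1 ≤ i → (j : ℕ∞) ≤ K i → x i j ∈ Q ∧ y i j ∈ Q)
    (hKlt : ∀ i j : ℕ, 1 ≤ i → (j : ℕ∞) < K i →
      B ≤ (f (x i j) - fslb) / (f (x i 0) - fslb))
    (J I : ℕ → ℕ)
    (hJ : ∀ i k : ℕ, 1 ≤ i → J i ≤ k → (k : ℕ∞) ≤ K i →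
      f (x i k) - fstar ≤ v * (f (x i 0) - fslb))
    (hI : ∀ i k : ℕ, 1 ≤ i → I i ≤ k → (k : ℕ∞) ≤ K i →
      f (y i k) - fstar ≤ v * ε' * (f (x i 0) - fslb))
    (i j : ℕ) (hi : 1 ≤ i) (hJij : J i ≤ j) (hdef : ((j + 1 : ℕ) : ℕ∞) ≤ K i) :
    (f (x i 0) - fslb) / (fstar - fslb) ≤ 1 / (B - v) ∧
    (I i ≤ j → (f (y i j) - fstar) / (fstar - fslb) ≤ ε') := by
  have hx0 : fslb < f (x i 0) := hslb.trans_le (hmin _ (hmem i 0 hi zero_le).1)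
  have hj : (j : ℕ∞) < K i := lt_of_lt_of_le (by exact_mod_cast j.lt_succ_self) hdef
  have hgap := restart_gap_le hx0 (hKlt i j hi hj) (hJ i j hi hJij hj.le)
  exact ⟨restart_ratio_le hslb (by linarith) hgap, fun hIij =>
    relative_error_le hslb hx0.le hB2v hε'.le hgap (hI i j hi hIij hj.le)⟩

/-- (Proposition: in the restart framework, if `j ≥ J_i` and `x_{i,j+1}` is
defined then the bound gap at the restart point is controlled, and if moreover `j ≥ I_i`
then `y_{i,j}` is an `ε'`-relative solution). -/
theorem restart_framework_relative_solution {n : ℕ} (Q : Set (EuclideanSpace ℝ (Fin n)))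
    (hQne : Q.Nonempty) (hQcl : IsClosed Q) (hQcv : Convex ℝ Q)
    (f : EuclideanSpace ℝ (Fin n) → ℝ) (hfc : ConvexOn ℝ Q f)
    (fstar : ℝ) (hattain : ∃ z ∈ Q, f z = fstar) (hmin : ∀ z ∈ Q, fstar ≤ f z)
    (fslb : ℝ) (hslb : fslb < fstar)
    (B v ε' : ℝ) (hB : 0 < B) (hv : 0 < v) (hBv : v ≤ B - B ^ 2) (hB2v : 2 * v ≤ B)
    (hε' : 0 < ε')
    (x y : ℕ → ℕ → EuclideanSpace ℝ (Fin n)) (K : ℕ → ℕ∞)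
    (x0 : EuclideanSpace ℝ (Fin n)) (hx0 : x0 ∈ Q)
    (hx10 : x 1 0 = x0) (hy10 : y 1 0 = x0)
    (hmem : ∀ i j : ℕ, 1 ≤ i → (j : ℕ∞) ≤ K i → x i j ∈ Q ∧ y i j ∈ Q)
    (hKlt : ∀ i j : ℕ, 1 ≤ i → (j : ℕ∞) < K i →
      B ≤ (f (x i j) - fslb) / (f (x i 0) - fslb))
    (hKeq : ∀ i j : ℕ, 1 ≤ i → K i = (j : ℕ∞) →
      (f (x i j) - fslb) / (f (x i 0) - fslb) < B)
    (hrestart : ∀ i j : ℕ, 1 ≤ i → K i = (j : ℕ∞) →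
      x (i + 1) 0 = x i j ∧ y (i + 1) 0 = x i j)
    (J I : ℕ → ℕ)
    (hJ : ∀ i k : ℕ, 1 ≤ i → J i ≤ k → (k : ℕ∞) ≤ K i →
      f (x i k) - fstar ≤ v * (f (x i 0) - fslb))
    (hI : ∀ i k : ℕ, 1 ≤ i → I i ≤ k → (k : ℕ∞) ≤ K i →
      f (y i k) - fstar ≤ v * ε' * (f (x i 0) - fslb))
    (i j : ℕ) (hi : 1 ≤ i) (hJij : J i ≤ j) (hdef : ((j + 1 : ℕ) : ℕ∞) ≤ K i) :
    (f (x i 0) - fslb) / (fstar - fslb) ≤ 1 / (B - v) ∧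
    (I i ≤ j → (f (y i j) - fstar) / (fstar - fslb) ≤ ε') :=
  restart_framework_relative_solution_general Q f fstar hmin fslb hslb B v ε' hv hB2v hε' x y K hmem
    hKlt J I hJ hI i j hi hJij hdef
end

section
/- In the restart framework, suppose exactly p outer indices have K_i finite (so the outer indices are 1,…,p+1 with K_{p+1} = +∞). Then there exist an outer index i and inner index j with y_{i,j} defined and (f(y_{i,j}) − f*)/(f* − f_slb) ≤ ε'; moreover, letting N̂ := Σ_{i'=1}^{i−1} K_{i'} + j denote the total number of inner iterations prior to and including the first such pair (i,j), it holds that either N̂ ≤ Σ_{i=1}^{p+1} J_i + I_{p+1}, or both N̂ ≤ Σ_{i=1}^{p+1} J_i + I_p + I_{p+1} and K_p ≥ J_p + 1. -/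
/-!
Write `D i = f (x i 0) - fslb ≥ fstar - fslb`. A restart contracts the gap, `D (i+1) < B * D i`.
If a stage overshoots its budget (`J i < K i`), the point `x i (J i)` is both `v`-accurate and
not yet contracted, which forces `(B - v) * D i ≤ fstar - fslb`. Two restarts after an overshooting
stage would give `fstar - fslb < B² * D i`, impossible since `B² ≤ B - v`; so only stage `p` may
overshoot. An overshooting stage (and the never-restarted stage `p + 1`, which overshoots
trivially) has `v * D i ≤ fstar - fslb`, so its `y`-iterates from `I i` on are `ε'`-accurate
relative to `fstar - fslb`. Counting inner iterations stage by stage gives the two bounds.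
-/

open Finset

theorem sum_toNat_le_sum_of_le {K : ℕ → ℕ∞} {J : ℕ → ℕ} {m n : ℕ} (hmn : m ≤ n)
    (hKJ : ∀ i, 1 ≤ i → i ≤ m → K i ≤ J i) :
    ∑ i ∈ Icc 1 m, (K i).toNat ≤ ∑ i ∈ Icc 1 n, J i :=
  calc ∑ i ∈ Icc 1 m, (K i).toNat
      ≤ ∑ i ∈ Icc 1 m, J i := sum_le_sum fun i hi =>
        ENat.toNat_le_of_le_natCast (hKJ i (mem_Icc.1 hi).1 (mem_Icc.1 hi).2)
    _ ≤ ∑ i ∈ Icc 1 n, J i := sum_le_sum_of_subset (Icc_subset_Icc_right hmn)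

theorem exists_pair_inner_count_le {K : ℕ → ℕ∞} {J I : ℕ → ℕ} {Accurate : ℕ → ℕ → Prop} {p : ℕ}
    (hfin : ∀ i, 1 ≤ i → i ≤ p → K i ≠ ⊤) (hinf : K (p + 1) = ⊤)
    (hearly : ∀ i, 1 ≤ i → i + 1 ≤ p → K i ≤ J i)
    (hacc : ∀ i j, 1 ≤ i → (J i : ℕ∞) < K i → I i ≤ j → (j : ℕ∞) ≤ K i → Accurate i j) :
    ∃ i j : ℕ, 1 ≤ i ∧ (j : ℕ∞) ≤ K i ∧ (∀ i' : ℕ, 1 ≤ i' → i' < i → K i' ≠ ⊤) ∧ Accurate i j ∧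
      ((∑ i' ∈ Icc 1 (i - 1), (K i').toNat) + j ≤ (∑ i' ∈ Icc 1 (p + 1), J i') + I (p + 1) ∨
        (((∑ i' ∈ Icc 1 (i - 1), (K i').toNat) + j ≤
            (∑ i' ∈ Icc 1 (p + 1), J i') + I p + I (p + 1)) ∧
          ((J p + 1 : ℕ) : ℕ∞) ≤ K p)) := by
  have hlast : Accurate (p + 1) (I (p + 1)) :=
    hacc _ _ le_add_self (hinf ▸ ENat.natCast_lt_top _) le_rfl (hinf ▸ le_top)
  have hbefore : ∀ i', 1 ≤ i' → i' < p + 1 → K i' ≠ ⊤ := fun i' h1 h2 => hfin i' h1 (by omega)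
  by_cases hover : 1 ≤ p ∧ (J p : ℕ∞) < K p
  · obtain ⟨hp, hJK⟩ := hover
    obtain ⟨q, rfl⟩ : ∃ q, p = q + 1 := ⟨p - 1, by omega⟩
    have hKp : ((J (q + 1) + 1 : ℕ) : ℕ∞) ≤ K (q + 1) := by
      push_cast
      exact Order.add_one_le_of_lt hJK
    have hsum := sum_toNat_le_sum_of_le (K := K) (J := J) (m := q) (n := q + 1 + 1) (by omega)
      fun i h1 h2 => hearly i h1 (by omega)
    by_cases hIK : (I (q + 1) : ℕ∞) ≤ K (q + 1)
    · refine ⟨q + 1, I (q + 1), hp, hIK, fun i' h1 h2 => hfin i' h1 h2.le,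
        hacc _ _ hp hJK le_rfl hIK, Or.inr ⟨?_, hKp⟩⟩
      simp only [Nat.add_sub_cancel]
      omega
    · have hKI : (K (q + 1)).toNat ≤ I (q + 1) :=
        ENat.toNat_le_of_le_natCast (not_le.1 hIK).le
      refine ⟨q + 1 + 1, I (q + 1 + 1), le_add_self, hinf ▸ le_top, hbefore, hlast,
        Or.inr ⟨?_, hKp⟩⟩
      rw [Nat.add_sub_cancel, sum_Icc_succ_top le_add_self]
      omega
  · refine ⟨p + 1, I (p + 1), le_add_self, hinf ▸ le_top, hbefore, hlast, Or.inl ?_⟩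
    have hKJ : ∀ i, 1 ≤ i → i ≤ p → K i ≤ J i := fun i h1 h2 => by
      rcases Nat.lt_or_eq_of_le h2 with h | rfl
      · exact hearly i h1 h
      · exact not_lt.1 fun hJK => hover ⟨h1, hJK⟩
    have hsum := sum_toNat_le_sum_of_le (n := p + 1) (Nat.le_succ p) hKJ
    rw [Nat.add_sub_cancel]
    omega

theorem lt_sub_mul_of_two_contractions {a b c F B v : ℝ} (hB : 0 < B) (hBv : v ≤ B - B ^ 2)
    (ha : 0 < a) (hb : b < B * a) (hc : c < B * b) (hF : F ≤ c) : F < (B - v) * a := by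
  nlinarith [mul_lt_mul_of_pos_left hb hB, mul_le_mul_of_nonneg_right hBv ha.le]

section RestartRun

variable {E : Type*} {f : E → ℝ} {fstar fslb B v ε' : ℝ} {x y : ℕ → ℕ → E} {K : ℕ → ℕ∞}
  {J I : ℕ → ℕ}

theorem restart_contracts (hKeq : ∀ i j : ℕ, 1 ≤ i → K i = (j : ℕ∞) →
      (f (x i j) - fslb) / (f (x i 0) - fslb) < B)
    (hrestart : ∀ i j : ℕ, 1 ≤ i → K i = (j : ℕ∞) → x (i + 1) 0 = x i j ∧ y (i + 1) 0 = x i j)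
    {i : ℕ} (hi : 1 ≤ i) (hD : 0 < f (x i 0) - fslb) (hK : K i ≠ ⊤) :
    f (x (i + 1) 0) - fslb < B * (f (x i 0) - fslb) := by
  have hKi : K i = ((K i).toNat : ℕ∞) := (ENat.natCast_toNat hK).symm
  rw [(hrestart i _ hi hKi).1]
  exact (div_lt_iff₀ hD).1 (hKeq i _ hi hKi)

theorem overshoot_bound (hKlt : ∀ i j : ℕ, 1 ≤ i → (j : ℕ∞) < K i →
      B ≤ (f (x i j) - fslb) / (f (x i 0) - fslb))
    (hJ : ∀ i k : ℕ, 1 ≤ i → J i ≤ k → (k : ℕ∞) ≤ K i →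
      f (x i k) - fstar ≤ v * (f (x i 0) - fslb))
    {i : ℕ} (hi : 1 ≤ i) (hD : 0 < f (x i 0) - fslb) (hJK : (J i : ℕ∞) < K i) :
    (B - v) * (f (x i 0) - fslb) ≤ fstar - fslb := by
  have hcontracted := (le_div_iff₀ hD).1 (hKlt i _ hi hJK)
  have haccurate := hJ i _ hi le_rfl hJK.le
  linarith

theorem le_of_next_restart (hB : 0 < B) (hBv : v ≤ B - B ^ 2) (hslb : fslb < fstar)
    (hstart : ∀ i, 1 ≤ i → fstar ≤ f (x i 0))
    (hKlt : ∀ i j : ℕ, 1 ≤ i → (j : ℕ∞) < K i →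
      B ≤ (f (x i j) - fslb) / (f (x i 0) - fslb))
    (hKeq : ∀ i j : ℕ, 1 ≤ i → K i = (j : ℕ∞) →
      (f (x i j) - fslb) / (f (x i 0) - fslb) < B)
    (hrestart : ∀ i j : ℕ, 1 ≤ i → K i = (j : ℕ∞) → x (i + 1) 0 = x i j ∧ y (i + 1) 0 = x i j)
    (hJ : ∀ i k : ℕ, 1 ≤ i → J i ≤ k → (k : ℕ∞) ≤ K i →
      f (x i k) - fstar ≤ v * (f (x i 0) - fslb))
    {i : ℕ} (hi : 1 ≤ i) (hK : K i ≠ ⊤) (hK' : K (i + 1) ≠ ⊤) : K i ≤ J i := by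
  have hD : ∀ k, 1 ≤ k → 0 < f (x k 0) - fslb := fun k hk => by linarith [hstart k hk]
  refine not_lt.1 fun hJK => (overshoot_bound hKlt hJ hi (hD i hi) hJK).not_gt ?_
  exact lt_sub_mul_of_two_contractions hB hBv (hD i hi)
    (restart_contracts hKeq hrestart hi (hD i hi) hK)
    (restart_contracts hKeq hrestart (by omega) (hD (i + 1) (by omega)) hK')
    (by linarith [hstart (i + 2) (by omega)])

theorem relative_gap_le_of_overshoot (hB2v : 2 * v ≤ B) (hε' : 0 < ε') (hslb : fslb < fstar)
    (hstart : ∀ i, 1 ≤ i → fstar ≤ f (x i 0))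
    (hKlt : ∀ i j : ℕ, 1 ≤ i → (j : ℕ∞) < K i →
      B ≤ (f (x i j) - fslb) / (f (x i 0) - fslb))
    (hJ : ∀ i k : ℕ, 1 ≤ i → J i ≤ k → (k : ℕ∞) ≤ K i →
      f (x i k) - fstar ≤ v * (f (x i 0) - fslb))
    (hI : ∀ i k : ℕ, 1 ≤ i → I i ≤ k → (k : ℕ∞) ≤ K i →
      f (y i k) - fstar ≤ v * ε' * (f (x i 0) - fslb))
    {i j : ℕ} (hi : 1 ≤ i) (hJK : (J i : ℕ∞) < K i) (hIj : I i ≤ j) (hjK : (j : ℕ∞) ≤ K i) :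
    (f (y i j) - fstar) / (fstar - fslb) ≤ ε' := by
  have hD : 0 < f (x i 0) - fslb := by linarith [hstart i hi]
  have hvD : v * (f (x i 0) - fslb) ≤ fstar - fslb := by
    nlinarith [overshoot_bound hKlt hJ hi hD hJK]
  rw [div_le_iff₀ (sub_pos.2 hslb)]
  nlinarith [hI i j hi hIj hjK, mul_le_mul_of_nonneg_left hvD hε'.le]

end RestartRun

theorem restart_framework_total_count_general {n : ℕ} (Q : Set (EuclideanSpace ℝ (Fin n)))
    (f : EuclideanSpace ℝ (Fin n) → ℝ)
    (fstar : ℝ) (hmin : ∀ z ∈ Q, fstar ≤ f z)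
    (fslb : ℝ) (hslb : fslb < fstar)
    (B v ε' : ℝ) (hB : 0 < B) (hBv : v ≤ B - B ^ 2) (hB2v : 2 * v ≤ B)
    (hε' : 0 < ε')
    (x y : ℕ → ℕ → EuclideanSpace ℝ (Fin n)) (K : ℕ → ℕ∞)
    (hmem : ∀ i j : ℕ, 1 ≤ i → (j : ℕ∞) ≤ K i → x i j ∈ Q ∧ y i j ∈ Q)
    (hKlt : ∀ i j : ℕ, 1 ≤ i → (j : ℕ∞) < K i →
      B ≤ (f (x i j) - fslb) / (f (x i 0) - fslb))
    (hKeq : ∀ i j : ℕ, 1 ≤ i → K i = (j : ℕ∞) →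
      (f (x i j) - fslb) / (f (x i 0) - fslb) < B)
    (hrestart : ∀ i j : ℕ, 1 ≤ i → K i = (j : ℕ∞) →
      x (i + 1) 0 = x i j ∧ y (i + 1) 0 = x i j)
    (J I : ℕ → ℕ)
    (hJ : ∀ i k : ℕ, 1 ≤ i → J i ≤ k → (k : ℕ∞) ≤ K i →
      f (x i k) - fstar ≤ v * (f (x i 0) - fslb))
    (hI : ∀ i k : ℕ, 1 ≤ i → I i ≤ k → (k : ℕ∞) ≤ K i →
      f (y i k) - fstar ≤ v * ε' * (f (x i 0) - fslb))
    (p : ℕ) (hfin : ∀ i : ℕ, 1 ≤ i → i ≤ p → K i ≠ ⊤) (hinf : K (p + 1) = ⊤) :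
    ∃ i j : ℕ, 1 ≤ i ∧ (j : ℕ∞) ≤ K i ∧ (∀ i' : ℕ, 1 ≤ i' → i' < i → K i' ≠ ⊤) ∧
      (f (y i j) - fstar) / (fstar - fslb) ≤ ε' ∧
      ((∑ i' ∈ Finset.Icc 1 (i - 1), (K i').toNat) + j ≤
          (∑ i' ∈ Finset.Icc 1 (p + 1), J i') + I (p + 1) ∨
        (((∑ i' ∈ Finset.Icc 1 (i - 1), (K i').toNat) + j ≤
            (∑ i' ∈ Finset.Icc 1 (p + 1), J i') + I p + I (p + 1)) ∧
          ((J p + 1 : ℕ) : ℕ∞) ≤ K p)) := by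
  have hstart : ∀ i, 1 ≤ i → fstar ≤ f (x i 0) := fun i hi => hmin _ (hmem i 0 hi bot_le).1
  refine exists_pair_inner_count_le hfin hinf (fun i hi hip => ?_)
    fun i j hi hJK hIj hjK => relative_gap_le_of_overshoot hB2v hε' hslb hstart hKlt hJ hI hi hJK
      hIj hjK
  exact le_of_next_restart hB hBv hslb hstart hKlt hKeq hrestart hJ hi (hfin i hi (by omega))
    (hfin (i + 1) (by omega) hip)

/-- (Proposition: in the restart framework with exactly `p` finite restarts,
an `ε'`-relative solution `y_{i,j}` is reached, and the total number of inner iterations up to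
the first such pair is bounded by one of two expressions). -/
theorem restart_framework_total_count {n : ℕ} (Q : Set (EuclideanSpace ℝ (Fin n)))
    (hQne : Q.Nonempty) (hQcl : IsClosed Q) (hQcv : Convex ℝ Q)
    (f : EuclideanSpace ℝ (Fin n) → ℝ) (hfc : ConvexOn ℝ Q f)
    (fstar : ℝ) (hattain : ∃ z ∈ Q, f z = fstar) (hmin : ∀ z ∈ Q, fstar ≤ f z)
    (fslb : ℝ) (hslb : fslb < fstar)
    (B v ε' : ℝ) (hB : 0 < B) (hv : 0 < v) (hBv : v ≤ B - B ^ 2) (hB2v : 2 * v ≤ B)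
    (hε' : 0 < ε')
    (x y : ℕ → ℕ → EuclideanSpace ℝ (Fin n)) (K : ℕ → ℕ∞)
    (x0 : EuclideanSpace ℝ (Fin n)) (hx0 : x0 ∈ Q)
    (hx10 : x 1 0 = x0) (hy10 : y 1 0 = x0)
    (hmem : ∀ i j : ℕ, 1 ≤ i → (j : ℕ∞) ≤ K i → x i j ∈ Q ∧ y i j ∈ Q)
    (hKlt : ∀ i j : ℕ, 1 ≤ i → (j : ℕ∞) < K i →
      B ≤ (f (x i j) - fslb) / (f (x i 0) - fslb))
    (hKeq : ∀ i j : ℕ, 1 ≤ i → K i = (j : ℕ∞) →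
      (f (x i j) - fslb) / (f (x i 0) - fslb) < B)
    (hrestart : ∀ i j : ℕ, 1 ≤ i → K i = (j : ℕ∞) →
      x (i + 1) 0 = x i j ∧ y (i + 1) 0 = x i j)
    (J I : ℕ → ℕ)
    (hJ : ∀ i k : ℕ, 1 ≤ i → J i ≤ k → (k : ℕ∞) ≤ K i →
      f (x i k) - fstar ≤ v * (f (x i 0) - fslb))
    (hI : ∀ i k : ℕ, 1 ≤ i → I i ≤ k → (k : ℕ∞) ≤ K i →
      f (y i k) - fstar ≤ v * ε' * (f (x i 0) - fslb))
    (p : ℕ) (hfin : ∀ i : ℕ, 1 ≤ i → i ≤ p → K i ≠ ⊤) (hinf : K (p + 1) = ⊤) :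
    ∃ i j : ℕ, 1 ≤ i ∧ (j : ℕ∞) ≤ K i ∧ (∀ i' : ℕ, 1 ≤ i' → i' < i → K i' ≠ ⊤) ∧
      (f (y i j) - fstar) / (fstar - fslb) ≤ ε' ∧
      ((∑ i' ∈ Finset.Icc 1 (i - 1), (K i').toNat) + j ≤
          (∑ i' ∈ Finset.Icc 1 (p + 1), J i') + I (p + 1) ∨
        (((∑ i' ∈ Finset.Icc 1 (i - 1), (K i').toNat) + j ≤
            (∑ i' ∈ Finset.Icc 1 (p + 1), J i') + I p + I (p + 1)) ∧
          ((J p + 1 : ℕ) : ℕ∞) ≤ K p)) :=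
  restart_framework_total_count_general Q f fstar hmin fslb hslb B v ε' hB hBv hB2v hε' x y K hmem
    hKlt hKeq hrestart J I hJ hI p hfin hinf
end

section
/- Let Q := {(x₁, x₂) ∈ ℝ² : x₁ ≥ 1} and f(x₁, x₂) := x₂²/x₁. Then f is convex on Q, f attains its minimum value f* = 0 on Q with Opt = {(x₁, 0) : x₁ ≥ 1}, and for every strict lower bound f_slb < 0 the growth constant is infinite: for every Ḡ > 0 there exists x ∈ Q with Dist(x, Opt) > Ḡ·(f(x) − f_slb). -/
/-! `f` is the perspective of `t ↦ t²`, hence convex, and it vanishes exactly on the `x₁`-axis.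
Along the parabola `x = (T², T)` the value `f x = 1` stays fixed while the distance `T` to that
axis is unbounded, so no constant `Ḡ` can bound the distance by `Ḡ (f x - f_slb)`. -/

open Metric

theorem sq_add_div_add_le {s t u v x y : ℝ} (hs : 0 ≤ s) (ht : 0 ≤ t) (hst : s + t = 1)
    (hx : 0 < x) (hy : 0 < y) :
    (s * u + t * v) ^ 2 / (s * x + t * y) ≤ s * (u ^ 2 / x) + t * (v ^ 2 / y) := by
  have hxy : 0 < s * x + t * y := by
    rcases hs.eq_or_lt with rfl | hs
    · simp_all
    · positivity
  have gap : (s * (u ^ 2 / x) + t * (v ^ 2 / y)) * (s * x + t * y) - (s * u + t * v) ^ 2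
      = s * t * (x * y) * (u / x - v / y) ^ 2 := by
    field_simp
    ring
  rw [div_le_iff₀ hxy]
  nlinarith [mul_nonneg (mul_nonneg (mul_nonneg hs ht) (mul_pos hx hy).le)
    (sq_nonneg (u / x - v / y))]

theorem convexOn_sq_div {E : Type*} [AddCommGroup E] [Module ℝ E] (a b : E →ₗ[ℝ] ℝ) :
    ConvexOn ℝ {p | 0 < a p} fun p => b p ^ 2 / a p := by
  refine ⟨convex_halfSpace_gt a.isLinear 0, fun p hp q hq s t hs ht hst => ?_⟩
  simp only [map_add, map_smul, smul_eq_mul]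
  exact sq_add_div_add_le hs ht hst hp hq

theorem abs_sub_le_infDist_of_subset_apply_eq {ι : Type*} [Fintype ι]
    {s : Set (EuclideanSpace ℝ ι)} {i : ι} {c : ℝ} (hs : s.Nonempty)
    (hsub : s ⊆ {p | p i = c}) (x : EuclideanSpace ℝ ι) :
    |x i - c| ≤ infDist x s :=
  (le_infDist hs).2 fun y hy => by
    rw [← (hsub hy : y i = c), ← Real.dist_eq]
    exact PiLp.dist_apply_le x y i

/-- Example with infinite growth constant: `Q = {x : x₁ ≥ 1}` and
`f(x₁,x₂) = x₂²/x₁`. -/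
theorem growth_constant_infinite_example
    (Q : Set (EuclideanSpace ℝ (Fin 2))) (f : EuclideanSpace ℝ (Fin 2) → ℝ)
    (hQ : Q = {p : EuclideanSpace ℝ (Fin 2) | 1 ≤ p 0})
    (hf : f = fun p : EuclideanSpace ℝ (Fin 2) => (p 1) ^ 2 / p 0) :
    ConvexOn ℝ Q f ∧
    (∃ z ∈ Q, f z = 0) ∧ (∀ z ∈ Q, (0 : ℝ) ≤ f z) ∧
    {z ∈ Q | f z = 0} = {p : EuclideanSpace ℝ (Fin 2) | 1 ≤ p 0 ∧ p 1 = 0} ∧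
    ∀ fslb : ℝ, fslb < 0 → ∀ Gbar : ℝ, 0 < Gbar →
      ∃ x ∈ Q, Gbar * (f x - fslb) < Metric.infDist x {z ∈ Q | f z = 0} := by
  subst hQ hf
  let proj (i : Fin 2) : EuclideanSpace ℝ (Fin 2) →ₗ[ℝ] ℝ := (EuclideanSpace.proj i).toLinearMap
  have hconvex : ConvexOn ℝ {p : EuclideanSpace ℝ (Fin 2) | 1 ≤ p 0} fun p => p 1 ^ 2 / p 0 :=
    (convexOn_sq_div (proj 0) (proj 1)).subset (fun p (hp : 1 ≤ p 0) => one_pos.trans_le hp)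
      (convex_halfSpace_ge (proj 0).isLinear 1)
  have hOpt : {z ∈ {p : EuclideanSpace ℝ (Fin 2) | 1 ≤ p 0} | z 1 ^ 2 / z 0 = 0} =
      {p | 1 ≤ p 0 ∧ p 1 = 0} := by
    ext p
    simp only [Set.mem_ofPred_eq]
    exact and_congr_right fun hp => by simp [(one_pos.trans_le hp).ne']
  refine ⟨hconvex, ⟨!₂[1, 0], by simp, by simp⟩,
    fun z (hz : 1 ≤ z 0) => div_nonneg (sq_nonneg _) (by linarith), hOpt, ?_⟩
  intro fslb hfslb Gbar hGbar
  rw [hOpt]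
  set T := Gbar * (1 - fslb) + 1
  have hT : 1 < T := by have := mul_pos hGbar (by linarith : 0 < 1 - fslb); linarith
  refine ⟨!₂[T ^ 2, T], one_le_pow₀ hT.le, ?_⟩
  have hOpt_ne : {p : EuclideanSpace ℝ (Fin 2) | 1 ≤ p 0 ∧ p 1 = 0}.Nonempty := ⟨!₂[1, 0], by simp⟩
  calc Gbar * (T ^ 2 / T ^ 2 - fslb) < T := by
        rw [div_self (by positivity)]; linarith
    _ = |T - 0| := by rw [sub_zero, abs_of_pos (by linarith)]
    _ ≤ _ := abs_sub_le_infDist_of_subset_apply_eq hOpt_ne (fun p hp => hp.2) !₂[T ^ 2, T]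
end
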